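/- arXiv:2111.14015 — 9 statements merged into one kernel-verified Lean document; each statement's English description precedes it below -/
import Mathlib

section
/- Let G be a finite group. Every subgroup of G is isolated if and only if every nontrivial element of G has prime order (i.e., G is a CP₁-group). -/
/-- A subgroup `H` of a group `G` is *isolated* if for every `x : G`,
either `x ∈ H` or `⟨x⟩ ⊓ H = ⊥`. -/
def IsIsolated {G : Type*} [Group G] (H : Subgroup G) : Prop :=
  ∀ x : G, x ∈ H ∨ Subgroup.zpowers x ⊓ H = ⊥

theorem stmt_0 {G : Type*} [Group G] [Finite G] :
    (∀ H : Subgroup G, IsIsolated H) ↔ ∀ g : G, g ≠ 1 → (orderOf g).Prime := by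
  constructor
  · intro hiso g hg
    set n := orderOf g with hn
    have hn0 : 0 < n := orderOf_pos g
    have hn1 : n ≠ 1 := by simpa [hn, orderOf_eq_one_iff] using hg
    by_contra hnp
    obtain ⟨p, hp, hpdvd⟩ := Nat.exists_prime_and_dvd hn1
    have hpn : p ≠ n := by rintro rfl; exact hnp hp
    rcases hiso (Subgroup.zpowers (g ^ p)) g with hmem | hbot
    · -- zpowers g ≤ zpowers (g^p), so n ∣ n/p, contradiction
      have hle : Subgroup.zpowers g ≤ Subgroup.zpowers (g ^ p) :=
        Subgroup.zpowers_le.2 hmem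
      have hdvd : Nat.card (Subgroup.zpowers g) ∣ Nat.card (Subgroup.zpowers (g ^ p)) :=
        Subgroup.card_dvd_of_le hle
      rw [Nat.card_zpowers, Nat.card_zpowers, orderOf_pow, Nat.gcd_eq_right hpdvd] at hdvd
      have hlt : n / p < n := Nat.div_lt_self hn0 hp.one_lt
      have hpos : 0 < n / p := Nat.div_pos (Nat.le_of_dvd hn0 hpdvd) hp.pos
      exact absurd (Nat.le_of_dvd hpos hdvd) (not_le.2 hlt)
    · have : g ^ p ∈ Subgroup.zpowers g ⊓ Subgroup.zpowers (g ^ p) :=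
        Subgroup.mem_inf.2 ⟨Subgroup.pow_mem _ (Subgroup.mem_zpowers g) p, Subgroup.mem_zpowers _⟩
      rw [hbot, Subgroup.mem_bot] at this
      have : n ∣ p := orderOf_dvd_of_pow_eq_one this
      rcases (Nat.dvd_prime hp).1 this with h1 | h1
      · exact hn1 h1
      · exact hpn h1.symm
  · intro h H x
    by_cases hx : x ∈ H
    · exact Or.inl hx
    · right
      rw [eq_bot_iff]
      intro y hy
      obtain ⟨hyx, hyH⟩ := Subgroup.mem_inf.1 hy
      rw [Subgroup.mem_bot]
      by_contra hy1
      exfalso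
      have hx1 : x ≠ 1 := by
        rintro rfl
        rw [Subgroup.zpowers_one_eq_bot, Subgroup.mem_bot] at hyx
        exact hy1 hyx
      have hp : (orderOf x).Prime := h x hx1
      haveI : Fact (orderOf x).Prime := ⟨hp⟩
      -- work inside zpowers x
      have hcard : Nat.card (Subgroup.zpowers x) = orderOf x := Nat.card_zpowers x
      have hy' : (⟨y, hyx⟩ : Subgroup.zpowers x) ≠ 1 := by
        simpa [Subtype.ext_iff] using hy1
      have hxmem : (⟨x, Subgroup.mem_zpowers x⟩ : Subgroup.zpowers x) ∈
          Subgroup.zpowers (⟨y, hyx⟩ : Subgroup.zpowers x) :=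
        mem_zpowers_of_prime_card hcard hy'
      obtain ⟨k, hk⟩ := hxmem
      have : x = y ^ k := by
        have := congrArg (Subgroup.subtype _) hk
        simpa using this.symm
      exact hx (this ▸ Subgroup.zpow_mem H hyH k)
end

section
/- Let G be a finite group. G has exactly one non-isolated subgroup (i.e., the number of isolated subgroups equals the number of all subgroups minus 1) if and only if G is cyclic of order p² for some prime p. -/
open Subgroup
open scoped Pointwise

section Aux

variable {G : Type*} [Group G] [Finite G] {K : Subgroup G}

lemma nonIsolated_of (x : G) {H : Subgroup G} (h3 : x ∉ H)
    (h4 : zpowers x ⊓ H ≠ ⊥) : ¬ IsIsolated H := fun hiso => by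
  rcases hiso x with h | h
  · exact h3 h
  · exact h4 h

lemma aux_eq_K (hset : {H : Subgroup G | ¬ IsIsolated H} = {K})
    {x : G} {H : Subgroup G} (h1 : H ≤ zpowers x) (h2 : H ≠ ⊥) (h3 : x ∉ H) : H = K := by
  have hni : H ∈ {H : Subgroup G | ¬ IsIsolated H} :=
    nonIsolated_of x h3 (by rwa [inf_of_le_right h1])
  rw [hset] at hni
  simpa using hni

lemma aux_div (hset : {H : Subgroup G | ¬ IsIsolated H} = {K}) {z : G} {d : ℕ}
    (hd : d ∣ orderOf z) (hd1 : d ≠ 1) (hdn : d ≠ orderOf z) :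
    Nat.card K = d ∧ K ≤ zpowers z := by
  have hz0 : 0 < orderOf z := orderOf_pos z
  have he : (orderOf z / d) ∣ orderOf z := Nat.div_dvd_of_dvd hd
  have hw : orderOf (z ^ (orderOf z / d)) = d := by
    rw [orderOf_pow, Nat.gcd_eq_right he, Nat.div_div_self hd hz0.ne']
  have hlt : d < orderOf z := lt_of_le_of_ne (Nat.le_of_dvd hz0 hd) hdn
  have hne : z ^ (orderOf z / d) ≠ 1 := by
    intro h; rw [h, orderOf_one] at hw; exact hd1 hw.symm
  have hle : zpowers (z ^ (orderOf z / d)) ≤ zpowers z :=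
    zpowers_le.2 (pow_mem (mem_zpowers z) _)
  have hznotin : z ∉ zpowers (z ^ (orderOf z / d)) := by
    intro hzin
    have hcard := Subgroup.card_le_of_le (zpowers_le.2 hzin)
    rw [Nat.card_zpowers, Nat.card_zpowers, hw] at hcard
    omega
  have hKeq := aux_eq_K hset hle (by rwa [Ne, zpowers_eq_bot]) hznotin
  constructor
  · rw [← hKeq, Nat.card_zpowers, hw]
  · rw [← hKeq]; exact hle

lemma aux_normal (hset : {H : Subgroup G | ¬ IsIsolated H} = {K}) : K.Normal := by
  have hKni : ¬ IsIsolated K := by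
    have : K ∈ ({K} : Set (Subgroup G)) := rfl
    rw [← hset] at this; exact this
  constructor
  intro k hk g
  have hinj : Function.Injective (MulAut.conj g).toMonoidHom := (MulAut.conj g).injective
  have hconj : (K.map (MulAut.conj g).toMonoidHom) = K := by
    have hni : K.map (MulAut.conj g).toMonoidHom ∈ {H : Subgroup G | ¬ IsIsolated H} := by
      unfold IsIsolated at hKni
      push_neg at hKni
      obtain ⟨x, hx1, hx2⟩ := hKni
      refine nonIsolated_of ((MulAut.conj g).toMonoidHom x) ?_ ?_
      · intro hmem
        obtain ⟨y, hy, hxy⟩ := hmem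
        have : y = x := hinj hxy
        exact hx1 (this ▸ hy)
      · rw [← MonoidHom.map_zpowers, ← Subgroup.map_inf _ _ _ hinj, Ne,
          Subgroup.map_eq_bot_iff_of_injective _ hinj]
        exact hx2
    rw [hset] at hni
    simpa using hni
  rw [← hconj]
  exact ⟨k, hk, rfl⟩

end Aux

theorem stmt_1 {G : Type*} [Group G] [Finite G] :
    {H : Subgroup G | ¬ IsIsolated H}.ncard = 1 ↔
      ∃ p : ℕ, p.Prime ∧ IsCyclic G ∧ Nat.card G = p ^ 2 := by
  constructor
  · intro h
    obtain ⟨K, hset⟩ := Set.ncard_eq_one.mp h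
    have hKni : ¬ IsIsolated K := by
      have : K ∈ ({K} : Set (Subgroup G)) := rfl
      rw [← hset] at this; exact this
    unfold IsIsolated at hKni
    push_neg at hKni
    obtain ⟨x₀, hx₀K, hx₀inf⟩ := hKni
    have hKbot : K ≠ ⊥ := fun h => hx₀inf (by simp [h])
    have hKeq : zpowers x₀ ⊓ K = K :=
      aux_eq_K hset inf_le_left hx₀inf (fun h => hx₀K h.2)
    have hKle : K ≤ zpowers x₀ := hKeq ▸ inf_le_left
    set p := Nat.card K with hpdef
    set n := orderOf x₀ with hndef
    have hp1 : p ≠ 1 := fun h => hKbot ((Subgroup.eq_bot_iff_card _).2 h)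
    have hpn : p ∣ n := by
      have := Subgroup.card_dvd_of_le hKle
      rwa [Nat.card_zpowers] at this
    have hn0 : 0 < n := orderOf_pos x₀
    have hpneqn : p ≠ n := by
      intro h
      have hK' : K = zpowers x₀ :=
        Subgroup.eq_of_le_of_card_ge hKle (by rw [Nat.card_zpowers]; omega)
      exact hx₀K (hK' ▸ mem_zpowers x₀)
    -- p is prime
    have hp : p.Prime := by
      have hq : (p.minFac).Prime := Nat.minFac_prime hp1
      have hqn : p.minFac ∣ n := (Nat.minFac_dvd p).trans hpn
      have hqneqn : p.minFac ≠ n := by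
        intro hqe
        have hple : p ≤ n := Nat.le_of_dvd hn0 hpn
        have hppos : 0 < p := Nat.card_pos
        have hqle : p.minFac ≤ p := Nat.minFac_le hppos
        omega
      obtain ⟨hcardq, -⟩ := aux_div hset hqn hq.ne_one hqneqn
      rw [← hpdef] at hcardq
      rw [hcardq]
      exact hq
    -- n = p ^ 2
    have hn : n = p ^ 2 := by
      have hnm : n = p * (n / p) := (Nat.mul_div_cancel' hpn).symm
      have hm : (n / p) ∣ n := Nat.div_dvd_of_dvd hpn
      have hm1 : n / p ≠ 1 := by
        intro h; rw [h, mul_one] at hnm; exact hpneqn hnm.symm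
      have hmn : n / p ≠ n := by
        intro h
        rw [h] at hnm
        have : p * n = 1 * n := by omega
        exact hp1 (Nat.eq_of_mul_eq_mul_right hn0 this)
      obtain ⟨hcardm, -⟩ := aux_div hset hm hm1 hmn
      rw [← hpdef] at hcardm
      rw [hnm, ← hcardm, pow_two]
    haveI hnorm : K.Normal := aux_normal hset
    -- every element lies in zpowers x₀
    have hforall : ∀ y : G, y ∈ zpowers x₀ := by
      intro y
      by_contra hy
      have hyK : y ∉ K := fun h => hy (hKle h)
      by_cases hinf : zpowers y ⊓ K = ⊥
      · -- all elements outside C have prime order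
        have hy1 : y ≠ 1 := fun h => hy (h ▸ (zpowers x₀).one_mem)
        have hoy1 : orderOf y ≠ 1 := by simpa [orderOf_eq_one_iff] using hy1
        have hq' : (orderOf y).Prime := by
          by_contra hnp
          have hdvd : (orderOf y).minFac ∣ orderOf y := Nat.minFac_dvd _
          have hd1 : (orderOf y).minFac ≠ 1 := (Nat.minFac_prime hoy1).ne_one
          have hdn : (orderOf y).minFac ≠ orderOf y := by
            intro h
            exact hnp (h ▸ Nat.minFac_prime hoy1)
          obtain ⟨-, hKley⟩ := aux_div hset hdvd hd1 hdn
          have := inf_of_le_right hKley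
          rw [hinf] at this
          exact hKbot this.symm
        -- x₀ ∉ K ⊔ zpowers y
        have hx₀H : x₀ ∉ K ⊔ zpowers y := by
          intro hmem
          have hmem' : (x₀ : G) ∈ (K : Set G) * (zpowers y : Set G) := by
            rw [← Subgroup.normal_mul]; exact hmem
          obtain ⟨k, hk, w, hw, hkw⟩ := hmem'
          by_cases hw1 : w = 1
          · exact hx₀K (by rw [← hkw, hw1]; simpa using hk)
          · have hwC : w ∈ zpowers x₀ := by
              have hwe : w = k⁻¹ * x₀ := eq_inv_mul_iff_mul_eq.mpr hkw
              rw [hwe]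
              exact mul_mem (inv_mem (hKle hk)) (mem_zpowers x₀)
            have hwq : orderOf w ∣ orderOf y := by
              obtain ⟨j, hj⟩ := mem_zpowers_iff.mp hw
              apply orderOf_dvd_of_pow_eq_one
              rw [← hj, ← zpow_natCast (y ^ j), ← zpow_mul, mul_comm, zpow_mul,
                zpow_natCast, pow_orderOf_eq_one, one_zpow]
            have hwq' : orderOf w = orderOf y :=
              ((Nat.dvd_prime hq').mp hwq).resolve_left
                (by simpa [orderOf_eq_one_iff] using hw1)
            have hzeq : zpowers w = zpowers y :=
              Subgroup.eq_of_le_of_card_ge (zpowers_le.2 hw)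
                (by rw [Nat.card_zpowers, Nat.card_zpowers, hwq'])
            have hyw : y ∈ zpowers w := hzeq ▸ mem_zpowers y
            exact hy (zpowers_le.2 hwC hyw)
        -- K ⊔ zpowers y is non-isolated, hence equals K
        have hHK : K ⊔ zpowers y = K := by
          have hni : K ⊔ zpowers y ∈ {H : Subgroup G | ¬ IsIsolated H} :=
            nonIsolated_of x₀ hx₀H (fun h =>
              hKbot (le_bot_iff.mp (h ▸ le_inf hKle le_sup_left)))
          rw [hset] at hni
          simpa using hni
        exact hyK (hHK ▸ (le_sup_right (a := K) (mem_zpowers y)))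
      · -- K ≤ zpowers y, and then zpowers x₀ is non-isolated: contradiction
        have heq : zpowers y ⊓ K = K :=
          aux_eq_K hset inf_le_left hinf (fun h => hyK h.2)
        have hKley : K ≤ zpowers y := heq ▸ inf_le_left
        have hCK : zpowers x₀ = K := by
          have hni : zpowers x₀ ∈ {H : Subgroup G | ¬ IsIsolated H} :=
            nonIsolated_of y hy (fun h =>
              hKbot (le_bot_iff.mp (h ▸ le_inf hKley hKle)))
          rw [hset] at hni
          simpa using hni
        have : p = n := by rw [hpdef, ← hCK, Nat.card_zpowers]
        exact hpneqn this
    refine ⟨p, hp, ⟨⟨x₀, hforall⟩⟩, ?_⟩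
    have := orderOf_eq_card_of_forall_mem_zpowers hforall
    rw [← this, ← hndef, hn]
  · rintro ⟨p, hp, hcyc, hcard⟩
    obtain ⟨g, hg⟩ := hcyc.exists_generator
    have hog : orderOf g = p ^ 2 := by
      rw [orderOf_eq_card_of_forall_mem_zpowers hg, hcard]
    have hp1 : 1 < p := hp.one_lt
    have hogp : orderOf (g ^ p) = p := by
      rw [orderOf_pow, hog, Nat.gcd_eq_right (dvd_pow_self p two_ne_zero),
        pow_two, Nat.mul_div_cancel _ hp.pos]
    have hgK : g ∉ zpowers (g ^ p) := by
      intro h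
      have := Subgroup.card_le_of_le (zpowers_le.2 h)
      rw [Nat.card_zpowers, Nat.card_zpowers, hog, hogp] at this
      nlinarith
    have hKbot : zpowers (g ^ p) ≠ ⊥ := by
      rw [Ne, zpowers_eq_bot]
      intro h
      rw [h, orderOf_one] at hogp
      omega
    have hset : {H : Subgroup G | ¬ IsIsolated H} = {zpowers (g ^ p)} := by
      ext H
      simp only [Set.mem_setOf_eq, Set.mem_singleton_iff]
      constructor
      · intro hni
        unfold IsIsolated at hni
        push_neg at hni
        obtain ⟨x, hx, hxinf⟩ := hni
        have hHdvd : Nat.card H ∣ p ^ 2 := hcard ▸ Subgroup.card_subgroup_dvd_card H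
        have hHne1 : Nat.card H ≠ 1 := by
          intro h1
          have : H = ⊥ := (Subgroup.eq_bot_iff_card _).2 h1
          rw [this, inf_bot_eq] at hxinf
          exact hxinf rfl
        have hHnetop : H ≠ ⊤ := fun h => hx (h ▸ mem_top x)
        have hHcard : Nat.card H = p := by
          rcases (Nat.dvd_prime_pow hp).mp hHdvd with ⟨k, hk, hcardH⟩
          interval_cases k
          · rw [pow_zero] at hcardH; exact absurd hcardH hHne1
          · simpa using hcardH
          · exfalso
            apply hHnetop
            apply Subgroup.eq_top_of_card_eq
            rw [hcardH, hcard]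
        have hHle : H ≤ zpowers (g ^ p) := by
          intro h hh
          have hpow : h ^ p = 1 := by
            have h1 : (⟨h, hh⟩ : H) ^ p = 1 := by
              rw [← hHcard]; exact pow_card_eq_one'
            have := congrArg (Subtype.val) h1
            simpa using this
          obtain ⟨j, hj⟩ := mem_zpowers_iff.mp (hg h)
          have hzp : g ^ (j * (p : ℤ)) = 1 := by
            rw [zpow_mul, hj, zpow_natCast, hpow]
          have hdvd2 : ((p : ℤ)) * (p : ℤ) ∣ j * (p : ℤ) := by
            have := orderOf_dvd_iff_zpow_eq_one.mpr hzp
            rw [hog] at this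
            have h2 : ((p : ℤ)) ^ 2 ∣ j * (p : ℤ) := by exact_mod_cast this
            rwa [pow_two] at h2
          have hpj : (p : ℤ) ∣ j := by
            have hp0 : (p : ℤ) ≠ 0 := by exact_mod_cast hp.pos.ne'
            exact (mul_dvd_mul_iff_right hp0).mp hdvd2
          obtain ⟨t, rfl⟩ := hpj
          rw [← hj]
          refine ⟨t, ?_⟩
          show ((g : G) ^ p) ^ t = g ^ ((p : ℤ) * t)
          rw [← zpow_natCast g p, ← zpow_mul]
        exact Subgroup.eq_of_le_of_card_ge hHle (by rw [Nat.card_zpowers, hogp, hHcard])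
      · rintro rfl
        refine nonIsolated_of g hgK ?_
        rw [inf_of_le_right (zpowers_le.2 (pow_mem (mem_zpowers g) p))]
        exact hKbot
    rw [hset, Set.ncard_singleton]
end

section
/- Let G be a finite group. G has exactly two non-isolated subgroups if and only if G is cyclic of order p³ for some prime p, or G is cyclic of order pq for distinct primes p and q. -/
set_option linter.unusedSectionVars false

open Subgroup

section Aux

variable {G : Type*} [Group G]

lemma not_isolated_iff {H : Subgroup G} :
    ¬ IsIsolated H ↔ ∃ x : G, x ∉ H ∧ Subgroup.zpowers x ⊓ H ≠ ⊥ := by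
  unfold IsIsolated; push_neg; rfl

lemma isIsolated_bot : IsIsolated (⊥ : Subgroup G) := fun _ => Or.inr (by simp)

lemma isIsolated_top : IsIsolated (⊤ : Subgroup G) := fun _ => Or.inl trivial

lemma notIsolated_of_lt {x : G} {K : Subgroup G} (h1 : K ≠ ⊥) (h2 : K < zpowers x) :
    ¬ IsIsolated K := by
  rw [not_isolated_iff]
  refine ⟨x, fun hx => absurd (zpowers_le.mpr hx) h2.not_ge, ?_⟩
  rwa [inf_of_le_right h2.le]

variable [Finite G]

lemma orderOf_dvd_card_of_mem {H : Subgroup G} {x : G} (hx : x ∈ H) :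
    orderOf x ∣ Nat.card H :=
  (Nat.card_zpowers x) ▸ card_dvd_of_le (zpowers_le.mpr hx)

lemma sub_ne_bot_iff {H : Subgroup G} : H ≠ ⊥ ↔ ∃ x ∈ H, x ≠ 1 := by
  constructor
  · intro h
    by_contra hc
    push_neg at hc
    exact h (eq_bot_iff.mpr (fun x hx => mem_bot.mpr (hc x hx)))
  · rintro ⟨x, hx, hne⟩ rfl
    exact hne (mem_bot.mp hx)

instance zpowers_isCyclic' (x : G) : IsCyclic (zpowers x) := by
  refine ⟨⟨⟨x, mem_zpowers x⟩, fun y => ?_⟩⟩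
  obtain ⟨k, hk⟩ := y.2
  exact ⟨k, Subtype.ext (by simpa using hk)⟩

lemma exists_gen {x : G} {H : Subgroup G} (hH : H ≤ zpowers x) :
    ∃ h : G, h ∈ H ∧ H = zpowers h := by
  obtain ⟨g, hg⟩ := Subgroup.isCyclic (H.subgroupOf (zpowers x)) |>.exists_generator
  refine ⟨((g : zpowers x) : G), (mem_subgroupOf.mp g.2), le_antisymm ?_ (zpowers_le.mpr (mem_subgroupOf.mp g.2))⟩
  intro z hz
  obtain ⟨k, hk⟩ := hg ⟨⟨z, hH hz⟩, mem_subgroupOf.mpr hz⟩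
  refine ⟨k, ?_⟩
  have := congrArg (fun w : (H.subgroupOf (zpowers x)) => ((w : zpowers x) : G)) hk
  simpa using this

lemma subgroup_of_zpowers_eq {x : G} {H : Subgroup G} (hH : H ≤ zpowers x) :
    H = zpowers (x ^ (orderOf x / Nat.card H)) := by
  obtain ⟨h, hmem, rfl⟩ := exists_gen hH
  set n := orderOf x with hn
  have hn0 : n ≠ 0 := (orderOf_pos x).ne'
  obtain ⟨j, hj⟩ : h ∈ Submonoid.powers x := mem_powers_iff_mem_zpowers.mpr (hH hmem)
  dsimp only at hj
  have hd : Nat.card (zpowers h) = orderOf h := Nat.card_zpowers h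
  set e := n.gcd j with he
  have hord : orderOf h = n / e := by rw [← hj, orderOf_pow]
  have hedvd : e ∣ n := Nat.gcd_dvd_left n j
  have hee : n / (n / e) = e := Nat.div_div_self hedvd hn0
  have hcard : n / Nat.card (zpowers h) = e := by rw [hd, hord, hee]
  rw [hcard]
  -- show zpowers h = zpowers (x ^ e)
  have hxe : x ^ e ∈ zpowers h := by
    have hbez : (e : ℤ) = n * n.gcdA j + j * n.gcdB j := Nat.gcd_eq_gcd_ab n j
    have : x ^ (e : ℤ) = (x ^ (n : ℤ)) ^ (n.gcdA j) * (x ^ (j : ℤ)) ^ (n.gcdB j) := by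
      rw [← zpow_mul, ← zpow_mul, ← zpow_add, ← hbez]
    have hxn : x ^ (n : ℤ) = 1 := by rw [zpow_natCast, hn, pow_orderOf_eq_one]
    have hxj : x ^ (j : ℤ) = h := by rw [zpow_natCast, hj]
    rw [hxn, hxj, one_zpow, one_mul] at this
    rw [← zpow_natCast x e, this]
    exact zpow_mem (mem_zpowers h) _
  have hle : zpowers (x ^ e) ≤ zpowers h := zpowers_le.mpr hxe
  have hce : orderOf (x ^ e) = n / e := by
    rw [orderOf_pow, Nat.gcd_eq_right hedvd]
  refine (Subgroup.eq_of_le_of_card_ge hle ?_).symm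
  rw [Nat.card_zpowers, Nat.card_zpowers, hord, hce]

lemma eq_of_le_zpowers_card_eq {x : G} {H K : Subgroup G} (hH : H ≤ zpowers x)
    (hK : K ≤ zpowers x) (h : Nat.card H = Nat.card K) : H = K := by
  rw [subgroup_of_zpowers_eq hH, subgroup_of_zpowers_eq hK, h]

end Aux

section Part2
variable {G : Type*} [Group G] [Finite G]

variable {G : Type*} [Group G] [Finite G]

example {p : ℕ} (hp : p.Prime) (x : G) (hx : orderOf x = p ^ 2) :
    orderOf (x ^ p) = p := by
  rw [orderOf_pow, hx]
  rw [Nat.gcd_eq_right (dvd_pow_self p two_ne_zero)]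
  rw [pow_two, Nat.mul_div_cancel_left p hp.pos]

-- conjugation
def cmap (g : G) (H : Subgroup G) : Subgroup G := H.map (MulAut.conj g).toMonoidHom

lemma cmap_injG (g : G) : Function.Injective ⇑(MulAut.conj g).toMonoidHom :=
  (MulAut.conj g).injective

lemma card_cmap (g : G) (H : Subgroup G) : Nat.card (cmap g H) = Nat.card H :=
  Nat.card_congr (Subgroup.equivMapOfInjective H _ (cmap_injG g)).toEquiv.symm

lemma cmap_zpowers (g x : G) : cmap g (zpowers x) = zpowers (g * x * g⁻¹) := by
  unfold cmap
  rw [MonoidHom.map_zpowers]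
  rfl

lemma mem_cmap {g y : G} {H : Subgroup G} : y ∈ cmap g H ↔ g⁻¹ * y * g ∈ H := by
  constructor
  · rintro ⟨h, hh, rfl⟩
    have : g⁻¹ * ((MulEquiv.toMonoidHom (MulAut.conj g)) h) * g = h := by
      show g⁻¹ * (g * h * g⁻¹) * g = h
      group
    rwa [this]
  · intro h
    refine ⟨g⁻¹ * y * g, h, ?_⟩
    show g * (g⁻¹ * y * g) * g⁻¹ = y
    group

lemma cmap_eq_bot_iff {g : G} {H : Subgroup G} : cmap g H = ⊥ ↔ H = ⊥ := by
  unfold cmap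
  rw [Subgroup.map_eq_bot_iff, (MonoidHom.ker_eq_bot_iff _).mpr (cmap_injG g), le_bot_iff]

lemma cmap_inf (g : G) (H K : Subgroup G) : cmap g (H ⊓ K) = cmap g H ⊓ cmap g K :=
  Subgroup.map_inf H K _ (cmap_injG g)

lemma cmap_sup (g : G) (H K : Subgroup G) : cmap g (H ⊔ K) = cmap g H ⊔ cmap g K :=
  Subgroup.map_sup H K _

lemma cmap_inj {g : G} {H K : Subgroup G} (h : cmap g H = cmap g K) : H = K :=
  Subgroup.map_injective (cmap_injG g) h

lemma cmap_le {g : G} {H K : Subgroup G} (h : H ≤ K) : cmap g H ≤ cmap g K :=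
  Subgroup.map_mono h

lemma notIsolated_cmap {g : G} {H : Subgroup G} (h : ¬ IsIsolated H) :
    ¬ IsIsolated (cmap g H) := by
  rw [not_isolated_iff] at h ⊢
  obtain ⟨x, hx, hne⟩ := h
  refine ⟨g * x * g⁻¹, ?_, ?_⟩
  · rw [mem_cmap]
    simpa [mul_assoc]
  · rw [← cmap_zpowers, ← cmap_inf]
    simpa [cmap_eq_bot_iff] using hne

lemma cmap_self_zpowers (g : G) : cmap g (zpowers g) = zpowers g := by
  rw [cmap_zpowers]
  simp

-- product lemma
lemma card_sup_of_norm {A B : Subgroup G} (hN : B ≤ (normalizer (A : Set G))) (hd : A ⊓ B = ⊥) :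
    Nat.card (A ⊔ B : Subgroup G) = Nat.card A * Nat.card B := by
  set E : Subgroup G :=
    { carrier := {z | ∃ a ∈ A, ∃ b ∈ B, z = a * b}
      one_mem' := ⟨1, A.one_mem, 1, B.one_mem, (one_mul 1).symm⟩
      mul_mem' := by
        rintro z w ⟨a₁, ha₁, b₁, hb₁, rfl⟩ ⟨a₂, ha₂, b₂, hb₂, rfl⟩
        refine ⟨a₁ * (b₁ * a₂ * b₁⁻¹), A.mul_mem ha₁ ?_, b₁ * b₂, B.mul_mem hb₁ hb₂, by group⟩
        exact (mem_normalizer_iff.mp (hN hb₁) a₂).mp ha₂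
      inv_mem' := by
        rintro z ⟨a, ha, b, hb, rfl⟩
        refine ⟨b⁻¹ * a⁻¹ * b, ?_, b⁻¹, B.inv_mem hb, by group⟩
        have := (mem_normalizer_iff.mp ((normalizer (A : Set G)).inv_mem (hN hb)) a⁻¹).mp (A.inv_mem ha)
        simpa using this } with hE
  have hsup : A ⊔ B = E := by
    apply le_antisymm
    · refine sup_le (fun a ha => ⟨a, ha, 1, B.one_mem, (mul_one a).symm⟩)
        (fun b hb => ⟨1, A.one_mem, b, hb, (one_mul b).symm⟩)
    · rintro z ⟨a, ha, b, hb, rfl⟩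
      exact Subgroup.mul_mem _ (le_sup_left (a := A) ha) (le_sup_right (b := B) hb)
  rw [hsup]
  have : Function.Bijective (fun p : A × B => (⟨(p.1 : G) * p.2, ⟨p.1, p.1.2, p.2, p.2.2, rfl⟩⟩ : E)) := by
    constructor
    · rintro ⟨a₁, b₁⟩ ⟨a₂, b₂⟩ h
      have h' : (a₁ : G) * b₁ = a₂ * b₂ := congrArg Subtype.val h
      have key : (a₂ : G)⁻¹ * (a₁ : G) = (b₂ : G) * (b₁ : G)⁻¹ := by
        have h2 : (a₁ : G) = (a₂ : G) * b₂ * (b₁ : G)⁻¹ := by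
          rw [← h']; group
        rw [h2]; group
      have hmem : (a₂ : G)⁻¹ * a₁ ∈ A ⊓ B := by
        constructor
        · exact A.mul_mem (A.inv_mem a₂.2) a₁.2
        · rw [key]; exact B.mul_mem b₂.2 (B.inv_mem b₁.2)
      rw [hd, mem_bot] at hmem
      have ha : a₁ = a₂ := by
        ext; exact (inv_mul_eq_one.mp hmem).symm
      have hb : b₁ = b₂ := by
        rw [ha] at h'
        ext; exact mul_left_cancel h'
      rw [ha, hb]
    · rintro ⟨z, a, ha, b, hb, rfl⟩
      exact ⟨(⟨a, ha⟩, ⟨b, hb⟩), rfl⟩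
  calc Nat.card E = Nat.card (A × B) := (Nat.card_congr (Equiv.ofBijective _ this)).symm
    _ = Nat.card A * Nat.card B := Nat.card_prod _ _


end Part2

section Part3
variable {G : Type*} [Group G] [Finite G]

lemma orderOf_pow_div {x : G} {d : ℕ} (hd : d ∣ orderOf x) (hd0 : d ≠ 0) :
    orderOf (x ^ (orderOf x / d)) = d := by
  have hn0 : orderOf x ≠ 0 := (orderOf_pos x).ne'
  rw [orderOf_pow, Nat.gcd_eq_right (Nat.div_dvd_of_dvd hd), Nat.div_div_self hd hn0]

lemma orderOf_sq_pow {p : ℕ} (hp : p.Prime) {x : G} (hx : orderOf x = p ^ 2) :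
    orderOf (x ^ p) = p := by
  rw [orderOf_pow, hx, Nat.gcd_eq_right (dvd_pow_self p two_ne_zero), pow_two,
    Nat.mul_div_cancel_left p hp.pos]

lemma nat_case_split (n : ℕ) (h0 : n ≠ 0) :
    n = 1 ∨ n.Prime ∨ (∃ p, p.Prime ∧ n = p ^ 2) ∨ (∃ p, p.Prime ∧ p ^ 3 ∣ n) ∨
      ∃ p q, p.Prime ∧ q.Prime ∧ p ≠ q ∧ p * q ∣ n := by
  by_cases h1 : n = 1
  · exact Or.inl h1
  set p := n.minFac with hpdef
  have hp : p.Prime := Nat.minFac_prime h1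
  have hpn : p ∣ n := Nat.minFac_dvd n
  by_cases h2 : ∃ q, q.Prime ∧ q ∣ n ∧ q ≠ p
  · obtain ⟨q, hq, hqn, hqp⟩ := h2
    refine Or.inr (Or.inr (Or.inr (Or.inr ⟨p, q, hp, hq, hqp.symm, ?_⟩)))
    exact (Nat.Coprime.mul_dvd_of_dvd_of_dvd
      ((Nat.coprime_primes hp hq).mpr (Ne.symm hqp)) hpn hqn)
  · push_neg at h2
    obtain ⟨k, hpow⟩ : ∃ k, n = p ^ k :=
      ⟨_, Nat.eq_prime_pow_of_unique_prime_dvd h0 (fun {q} hq hqn => h2 q hq hqn)⟩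
    match k, hpow with
    | 0, hpow => exact absurd (by rw [hpow, pow_zero]) h1
    | 1, hpow => exact Or.inr (Or.inl (by rw [hpow, pow_one]; exact hp))
    | 2, hpow => exact Or.inr (Or.inr (Or.inl ⟨p, hp, hpow⟩))
    | (m + 3), hpow =>
      refine Or.inr (Or.inr (Or.inr (Or.inl ⟨p, hp, ?_⟩)))
      rw [hpow]
      exact pow_dvd_pow p (by omega)

lemma int_binom (z : ℤ) (q : ℕ) : ∃ c : ℤ, (1 + z) ^ q = 1 + q * z + z ^ 2 * c := by
  induction q with
  | zero => exact ⟨0, by ring⟩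
  | succ k ih =>
    obtain ⟨c, hc⟩ := ih
    refine ⟨c + k + z * c, ?_⟩
    rw [pow_succ, hc]
    push_cast
    ring

lemma dvd_of_binom {p q : ℕ} (hp : p.Prime) (hq : q.Prime) (hpq : p ≠ q) {t : ℤ}
    (h : (p : ℤ) ^ 2 ∣ (1 + p * t) ^ q - 1) : (p : ℤ) ∣ t := by
  obtain ⟨c, hc⟩ := int_binom ((p : ℤ) * t) q
  rw [hc] at h
  have h2 : (p : ℤ) ^ 2 ∣ (q : ℤ) * (p * t) := by
    have : (1 + (q : ℤ) * (p * t) + (p * t) ^ 2 * c - 1) - (p : ℤ)^2 * (t^2 * c) = q * (p * t) := by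
      ring
    rw [← this]
    exact dvd_sub h (Dvd.intro _ rfl)
  have hprime : Prime (p : ℤ) := Nat.prime_iff_prime_int.mp hp
  have h3 : (p : ℤ) ∣ (q : ℤ) * t := by
    have : (p : ℤ) * ((q : ℤ) * t) = (q : ℤ) * (p * t) := by ring
    have h4 : (p : ℤ) * (p : ℤ) ∣ (p : ℤ) * ((q : ℤ) * t) := by
      rw [this, ← pow_two]; exact h2
    exact (mul_dvd_mul_iff_left (by exact_mod_cast hp.ne_zero : (p:ℤ) ≠ 0)).mp h4
  rcases hprime.dvd_mul.mp h3 with h5 | h5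
  · exfalso
    have : p ∣ q := by exact_mod_cast h5
    exact hpq ((Nat.prime_dvd_prime_iff_eq hp hq).mp this)
  · exact h5

lemma conj_pow_lemma {x y : G} {m : ℤ} (h : y⁻¹ * x * y = x ^ m) (k : ℕ) :
    (y⁻¹) ^ k * x * y ^ k = x ^ (m ^ k) := by
  induction k with
  | zero => simp
  | succ n ih =>
    have step : (y⁻¹) ^ (n + 1) * x * y ^ (n + 1) = y⁻¹ * ((y⁻¹) ^ n * x * y ^ n) * y := by
      rw [pow_succ', pow_succ]
      group
    rw [step, ih]
    have conj_zpow : ∀ (j : ℤ), y⁻¹ * x ^ j * y = (y⁻¹ * x * y) ^ j := by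
      intro j
      have := map_zpow (MulAut.conj y⁻¹) x j
      simpa [MulAut.conj_apply, mul_assoc] using this
    rw [conj_zpow, h, ← zpow_mul, ← pow_succ']

end Part3

section Backward
variable {G : Type*} [Group G] [Finite G]

lemma sub_ne_bot_of_card {H : Subgroup G} {n : ℕ} (h : Nat.card H = n) (hn : n ≠ 1) :
    H ≠ ⊥ := fun hb => hn (by rw [← h, hb, card_bot])

lemma backward_p3 {p : ℕ} (hp : p.Prime) (hc : IsCyclic G) (hcard : Nat.card G = p ^ 3) :
    {H : Subgroup G | ¬ IsIsolated H}.ncard = 2 := by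
  obtain ⟨g, hg⟩ := hc.exists_generator
  have hTop : zpowers g = ⊤ := eq_top_iff.mpr fun x _ => hg x
  have hog : orderOf g = p ^ 3 := by
    rw [← Nat.card_zpowers, hTop, Subgroup.card_top, hcard]
  set A := zpowers (g ^ (p ^ 2)) with hA
  set B := zpowers (g ^ p) with hB
  have cardA : Nat.card A = p := by
    rw [Nat.card_zpowers, orderOf_pow, hog,
      Nat.gcd_eq_right (pow_dvd_pow p (by norm_num)), Nat.pow_div (by norm_num) hp.pos,
      pow_one]
  have cardB : Nat.card B = p ^ 2 := by
    have h1 : (p ^ 3).gcd p = p := Nat.gcd_eq_right (dvd_pow_self p (by norm_num))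
    rw [Nat.card_zpowers, orderOf_pow, hog, h1]
    exact Nat.div_eq_of_eq_mul_left hp.pos (by ring)
  have hp1 : p ≠ 1 := hp.one_lt.ne'
  have hABne : A ≠ B := fun h => by
    rw [h, cardB] at cardA
    exact hp.one_lt.ne' (by nlinarith [hp.pos])
  have hAS : ¬ IsIsolated A := by
    refine notIsolated_of_lt (x := g ^ p) (sub_ne_bot_of_card cardA hp1) (lt_of_le_of_ne ?_ ?_)
    · exact zpowers_le.mpr ⟨((p : ℤ)), by
        show (g ^ p) ^ ((p : ℕ) : ℤ) = g ^ p ^ 2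
        rw [zpow_natCast, ← pow_mul, ← pow_two]⟩
    · intro h
      rw [h, cardB] at cardA
      exact hp.one_lt.ne' (by nlinarith [hp.pos])
  have hBS : ¬ IsIsolated B := by
    refine notIsolated_of_lt (sub_ne_bot_of_card cardB (by
      intro h
      exact hp1 (by nlinarith [hp.pos, hp.one_lt]))) (lt_of_le_of_ne (b := zpowers g) ?_ ?_)
    · exact zpowers_le.mpr (pow_mem (mem_zpowers g) p)
    · intro h
      have : Nat.card (zpowers g) = p ^ 3 := by rw [Nat.card_zpowers, hog]
      rw [h, this] at cardB
      nlinarith [hp.one_lt]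
  have hsub : {H : Subgroup G | ¬ IsIsolated H} ⊆ {A, B} := by
    intro H hH
    have hbot : H ≠ ⊥ := fun h => hH (h ▸ isIsolated_bot)
    have htop : H ≠ ⊤ := fun h => hH (h ▸ isIsolated_top)
    have hdvd : Nat.card H ∣ p ^ 3 := hcard ▸ card_subgroup_dvd_card H
    obtain ⟨k, hk3, hck⟩ := (Nat.dvd_prime_pow hp).mp hdvd
    have hle : H ≤ zpowers g := hTop ▸ le_top
    interval_cases k
    · exact absurd (Subgroup.card_eq_one.mp (by rw [hck, pow_zero])) hbot
    · exact Or.inl (eq_of_le_zpowers_card_eq hle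
        (zpowers_le.mpr ⟨((p ^ 2 : ℕ) : ℤ), zpow_natCast g (p ^ 2)⟩)
        (by rw [hck, pow_one, cardA]))
    · exact Or.inr (eq_of_le_zpowers_card_eq hle
        (zpowers_le.mpr ⟨((p : ℕ) : ℤ), zpow_natCast g p⟩)
        (by rw [hck, cardB]))
    · exact absurd (H.eq_top_of_card_eq (by rw [hck, hcard])) htop
  have hset : {H : Subgroup G | ¬ IsIsolated H} = {A, B} := by
    refine Set.Subset.antisymm hsub ?_
    rintro H (rfl | rfl)
    · exact hAS
    · exact hBS
  rw [hset]
  exact Set.ncard_pair hABne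

lemma backward_pq {p q : ℕ} (hp : p.Prime) (hq : q.Prime) (hpq : p ≠ q) (hc : IsCyclic G)
    (hcard : Nat.card G = p * q) :
    {H : Subgroup G | ¬ IsIsolated H}.ncard = 2 := by
  obtain ⟨g, hg⟩ := hc.exists_generator
  have hTop : zpowers g = ⊤ := eq_top_iff.mpr fun x _ => hg x
  have hog : orderOf g = p * q := by
    rw [← Nat.card_zpowers, hTop, Subgroup.card_top, hcard]
  set A := zpowers (g ^ p) with hA
  set B := zpowers (g ^ q) with hB
  have cardA : Nat.card A = q := by
    rw [Nat.card_zpowers, orderOf_pow, hog, Nat.gcd_eq_right (Dvd.intro q rfl),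
      Nat.mul_div_cancel_left q hp.pos]
  have cardB : Nat.card B = p := by
    rw [Nat.card_zpowers, orderOf_pow, hog, Nat.gcd_eq_right (Dvd.intro_left p rfl),
      Nat.mul_div_cancel p hq.pos]
  have hABne : A ≠ B := fun h => hpq (by rw [h, cardB] at cardA; exact cardA)
  have hpq1 : p * q ≠ p := by
    have := hq.one_lt; have := hp.pos; nlinarith
  have hpq2 : p * q ≠ q := by
    have := hp.one_lt; have := hq.pos; nlinarith
  have cardX : Nat.card (zpowers g) = p * q := by rw [Nat.card_zpowers, hog]
  have hAS : ¬ IsIsolated A := by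
    refine notIsolated_of_lt (x := g) (sub_ne_bot_of_card cardA hq.one_lt.ne')
      (lt_of_le_of_ne ?_ ?_)
    · exact zpowers_le.mpr (pow_mem (mem_zpowers g) p)
    · intro h; rw [h, cardX] at cardA; exact hpq2 cardA
  have hBS : ¬ IsIsolated B := by
    refine notIsolated_of_lt (x := g) (sub_ne_bot_of_card cardB hp.one_lt.ne')
      (lt_of_le_of_ne ?_ ?_)
    · exact zpowers_le.mpr (pow_mem (mem_zpowers g) q)
    · intro h; rw [h, cardX] at cardB; exact hpq1 cardB
  have hsub : {H : Subgroup G | ¬ IsIsolated H} ⊆ {A, B} := by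
    intro H hH
    have hbot : H ≠ ⊥ := fun h => hH (h ▸ isIsolated_bot)
    have htop : H ≠ ⊤ := fun h => hH (h ▸ isIsolated_top)
    have hdvd : Nat.card H ∣ p * q := hcard ▸ card_subgroup_dvd_card H
    have hle : H ≤ zpowers g := hTop ▸ le_top
    have hcases : Nat.card H = 1 ∨ Nat.card H = p ∨ Nat.card H = q ∨ Nat.card H = p * q := by
      by_cases hpd : p ∣ Nat.card H
      · obtain ⟨e, he⟩ := hpd
        have hedvd : e ∣ q := by
          have h2 : p * e ∣ p * q := he ▸ hdvd
          exact (mul_dvd_mul_iff_left (hp.pos.ne' : p ≠ 0)).mp h2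
        rcases hq.eq_one_or_self_of_dvd e hedvd with h | h
        · exact Or.inr (Or.inl (by rw [he, h, mul_one]))
        · exact Or.inr (Or.inr (Or.inr (by rw [he, h])))
      · have hcop : Nat.Coprime p (Nat.card H) := (Nat.Prime.coprime_iff_not_dvd hp).mpr hpd
        have hdq : Nat.card H ∣ q := hcop.symm.dvd_of_dvd_mul_left hdvd
        rcases hq.eq_one_or_self_of_dvd _ hdq with h | h
        · exact Or.inl h
        · exact Or.inr (Or.inr (Or.inl h))
    rcases hcases with h | h | h | h
    · exact absurd (Subgroup.card_eq_one.mp h) hbot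
    · exact Or.inr (eq_of_le_zpowers_card_eq hle (zpowers_le.mpr (pow_mem (mem_zpowers g) q))
        (by rw [h, cardB]))
    · exact Or.inl (eq_of_le_zpowers_card_eq hle (zpowers_le.mpr (pow_mem (mem_zpowers g) p))
        (by rw [h, cardA]))
    · exact absurd (H.eq_top_of_card_eq (by rw [h, hcard])) htop
  have hset : {H : Subgroup G | ¬ IsIsolated H} = {A, B} := by
    refine Set.Subset.antisymm hsub ?_
    rintro H (rfl | rfl)
    · exact hAS
    · exact hBS
  rw [hset]
  exact Set.ncard_pair hABne

end Backward

section Part5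
variable {G : Type*} [Group G] [Finite G]

lemma cmap_mul (g₁ g₂ : G) (H : Subgroup G) : cmap (g₁ * g₂) H = cmap g₁ (cmap g₂ H) := by
  ext z
  rw [mem_cmap, mem_cmap, mem_cmap]
  constructor <;> intro h
  · have : g₂⁻¹ * (g₁⁻¹ * z * g₁) * g₂ = (g₁ * g₂)⁻¹ * z * (g₁ * g₂) := by group
    rwa [this]
  · have : (g₁ * g₂)⁻¹ * z * (g₁ * g₂) = g₂⁻¹ * (g₁⁻¹ * z * g₁) * g₂ := by group
    rwa [this]

lemma cmap_one (H : Subgroup G) : cmap (1 : G) H = H := by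
  ext z
  rw [mem_cmap]
  simp

lemma cmap_inv_fix {x : G} {H : Subgroup G} (h : cmap x H = H) : cmap x⁻¹ H = H := by
  conv_lhs => rw [← h]
  rw [← cmap_mul, inv_mul_cancel, cmap_one]

lemma cmap_zpow_fix {x : G} {H : Subgroup G} (h : cmap x H = H) (k : ℤ) :
    cmap (x ^ k) H = H := by
  induction k using Int.induction_on with
  | zero => simpa using cmap_one H
  | succ n ih => rw [zpow_add, zpow_one, cmap_mul, h, ih]
  | pred n ih => rw [zpow_sub, zpow_one, cmap_mul, cmap_inv_fix h, ih]

lemma mem_normalizer_of_cmap {a : G} {B : Subgroup G} (h : cmap a B = B) :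
    a ∈ (normalizer (B : Set G)) := by
  rw [mem_normalizer_iff]
  intro z
  constructor
  · intro hz
    rw [← h, mem_cmap]
    have : a⁻¹ * (a * z * a⁻¹) * a = z := by group
    rwa [this]
  · intro hz
    rw [← h, mem_cmap] at hz
    have : a⁻¹ * (a * z * a⁻¹) * a = z := by group
    rwa [this] at hz

lemma conj_mem_of_cmap {g b : G} {B : Subgroup G} (h : cmap g B = B) (hb : b ∈ B) :
    g * b * g⁻¹ ∈ B := by
  rw [← h, mem_cmap]
  have : g⁻¹ * (g * b * g⁻¹) * g = b := by group
  rwa [this]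

lemma cmap_fix_of_card_ne {A B : Subgroup G}
    (hmem : ∀ H : Subgroup G, ¬ IsIsolated H → H = A ∨ H = B)
    (hA : ¬ IsIsolated A) (hne : Nat.card A ≠ Nat.card B) (g : G) : cmap g A = A := by
  rcases hmem _ (notIsolated_cmap (g := g) hA) with h | h
  · exact h
  · exact absurd (by rw [← h, card_cmap]) hne

lemma normal_of_cmap {A : Subgroup G} (h : ∀ g : G, cmap g A = A) : A.Normal :=
  ⟨fun n hn g => conj_mem_of_cmap (h g) hn⟩

lemma inf_ne_bot_of_le {A H K : Subgroup G} (hH : A ≤ H) (hK : A ≤ K) (hA : A ≠ ⊥) :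
    H ⊓ K ≠ ⊥ := fun hb => hA (le_bot_iff.mp (hb ▸ le_inf hH hK))

lemma orderOf_ne_one {y : G} (hy : y ≠ 1) : orderOf y ≠ 1 :=
  fun h => hy (orderOf_eq_one_iff.mp h)

lemma card_eq_orderOf_of_le {x : G} {H : Subgroup G} (hle : zpowers x ≤ H)
    (hcard : Nat.card H = orderOf x) : H = zpowers x :=
  (Subgroup.eq_of_le_of_card_ge hle (by rw [hcard, Nat.card_zpowers])).symm

end Part5

section Part6

lemma set_pair_eq {α : Type*} {s : Set α} {A B : α} (hS : s.ncard = 2) (hA : A ∈ s)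
    (hB : B ∈ s) (hne : A ≠ B) : s = {A, B} := by
  obtain ⟨A', B', hne', h⟩ := Set.ncard_eq_two.mp hS
  have hA' : A = A' ∨ A = B' := by
    have := h ▸ hA; simpa using this
  have hB' : B = A' ∨ B = B' := by
    have := h ▸ hB; simpa using this
  rcases hA' with rfl | rfl <;> rcases hB' with rfl | rfl
  · exact absurd rfl hne
  · exact h
  · rw [h, Set.pair_comm]
  · exact absurd rfl hne

variable {G : Type*} [Group G] [Finite G]

lemma prime_order_outside {g y : G} {A B : Subgroup G}
    (hmem : ∀ H : Subgroup G, ¬ IsIsolated H → H = A ∨ H = B)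
    (hAle : A ≤ zpowers g) (hBle : B ≤ zpowers g)
    (hdisj : zpowers y ⊓ zpowers g = ⊥) (hy : y ∉ zpowers g) :
    (orderOf y).Prime := by
  have hy1 : y ≠ 1 := fun h => hy (h ▸ (zpowers g).one_mem)
  by_contra hnp
  set r := (orderOf y).minFac with hr
  have hrp : r.Prime := Nat.minFac_prime (orderOf_ne_one hy1)
  have hrd : r ∣ orderOf y := Nat.minFac_dvd _
  have hrne : r ≠ orderOf y := fun h => hnp (h ▸ hrp)
  set K := zpowers (y ^ (orderOf y / r)) with hK
  have hcardK : Nat.card K = r := by rw [Nat.card_zpowers]; exact orderOf_pow_div hrd hrp.pos.ne'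
  have hKle : K ≤ zpowers y := zpowers_le.mpr (pow_mem (mem_zpowers y) _)
  have hKbot : K ≠ ⊥ := sub_ne_bot_of_card hcardK hrp.one_lt.ne'
  have hKS : ¬ IsIsolated K := by
    refine notIsolated_of_lt hKbot (lt_of_le_of_ne hKle ?_)
    intro h
    rw [h, Nat.card_zpowers] at hcardK
    exact hrne hcardK.symm
  have hKleX : K ≤ zpowers g := by
    rcases hmem K hKS with rfl | rfl
    · exact hAle
    · exact hBle
  exact hKbot (le_bot_iff.mp (hdisj ▸ le_inf hKle hKleX))

lemma top_eq_of_forall {X : Subgroup G} (h : ∀ y : G, y ∈ X) : X = ⊤ :=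
  eq_top_iff.mpr fun y _ => h y

lemma case1a {p : ℕ} (hp : p.Prime) (g : G) (hg : orderOf g = p ^ 3)
    (hS : {H : Subgroup G | ¬ IsIsolated H}.ncard = 2) :
    IsCyclic G ∧ Nat.card G = p ^ 3 := by
  set X := zpowers g with hX
  set A := zpowers (g ^ (p ^ 2)) with hA
  set B := zpowers (g ^ p) with hB
  have cardX : Nat.card X = p ^ 3 := by rw [Nat.card_zpowers, hg]
  have cardA : Nat.card A = p := by
    rw [Nat.card_zpowers, orderOf_pow, hg,
      Nat.gcd_eq_right (pow_dvd_pow p (by norm_num)), Nat.pow_div (by norm_num) hp.pos, pow_one]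
  have cardB : Nat.card B = p ^ 2 := by
    have h1 : (p ^ 3).gcd p = p := Nat.gcd_eq_right (dvd_pow_self p (by norm_num))
    rw [Nat.card_zpowers, orderOf_pow, hg, h1]
    exact Nat.div_eq_of_eq_mul_left hp.pos (by ring)
  have hp1 := hp.one_lt
  have hABne : A ≠ B := fun h => by
    rw [h, cardB] at cardA; nlinarith
  have hAX : A ≤ X := zpowers_le.mpr (pow_mem (mem_zpowers g) _)
  have hBX : B ≤ X := zpowers_le.mpr (pow_mem (mem_zpowers g) _)
  have hAS : ¬ IsIsolated A := by
    refine notIsolated_of_lt (x := g) (sub_ne_bot_of_card cardA hp1.ne') (lt_of_le_of_ne hAX ?_)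
    intro h; rw [h, cardX] at cardA; nlinarith
  have hBS : ¬ IsIsolated B := by
    refine notIsolated_of_lt (x := g) (sub_ne_bot_of_card cardB (by nlinarith)) (lt_of_le_of_ne hBX ?_)
    intro h; rw [h, cardX] at cardB; nlinarith
  have hpair := set_pair_eq hS hAS hBS hABne
  have hmem : ∀ H : Subgroup G, ¬ IsIsolated H → H = A ∨ H = B := by
    intro H h
    have : H ∈ ({A, B} : Set (Subgroup G)) := hpair ▸ h
    simpa using this
  have hXiso : IsIsolated X := by
    by_contra h
    rcases hmem X h with h' | h'
    · rw [h', cardA] at cardX; nlinarith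
    · rw [h', cardB] at cardX; nlinarith
  have hAbot : A ≠ ⊥ := sub_ne_bot_of_card cardA hp1.ne'
  have hAfix : ∀ g' : G, cmap g' A = A :=
    cmap_fix_of_card_ne hmem hAS (by rw [cardA, cardB]; nlinarith)
  have hall : ∀ y : G, y ∈ X := by
    intro y
    by_contra hy
    have hdisj : zpowers y ⊓ X = ⊥ := by
      rcases hXiso y with h | h
      · exact absurd h hy
      · exact h
    have hr : (orderOf y).Prime := prime_order_outside hmem hAX hBX hdisj hy
    set r := orderOf y with hro
    set H := A ⊔ zpowers y with hH
    have hinf : A ⊓ zpowers y = ⊥ := by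
      rw [inf_comm]
      exact le_bot_iff.mp (hdisj ▸ inf_le_inf_left _ hAX)
    have hnorm : zpowers y ≤ (normalizer (A : Set G)) := fun z _ => mem_normalizer_of_cmap (hAfix z)
    have cardH : Nat.card H = p * r := by
      rw [hH, card_sup_of_norm hnorm hinf, cardA, Nat.card_zpowers]
    have hgH : g ∉ H := by
      intro hgmem
      have hdvd : p ^ 3 ∣ p * r := by
        rw [← hg, ← cardH]; exact orderOf_dvd_card_of_mem hgmem
      have hdvd2 : p * p ∣ r := by
        have : p * (p * p) ∣ p * r := by
          have e : p * (p * p) = p ^ 3 := by ring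
          rwa [e]
        exact (mul_dvd_mul_iff_left hp.pos.ne').mp this
      rcases hr.eq_one_or_self_of_dvd _ hdvd2 with h | h
      · nlinarith
      · have : p ∣ r := h ▸ Dvd.intro p rfl
        rcases hr.eq_one_or_self_of_dvd _ this with h2 | h2
        · nlinarith
        · rw [← h2] at h; nlinarith
    have hHS : ¬ IsIsolated H := by
      rw [not_isolated_iff]
      exact ⟨g, hgH, inf_ne_bot_of_le hAX le_sup_left hAbot⟩
    have hyH : y ∈ H := (le_sup_right : zpowers y ≤ A ⊔ zpowers y) (mem_zpowers y)
    rcases hmem H hHS with h | h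
    · exact hy (hAX (h ▸ hyH))
    · exact hy (hBX (h ▸ hyH))
  have hXtop : X = ⊤ := top_eq_of_forall hall
  constructor
  · exact ⟨⟨g, fun z => hall z⟩⟩
  · rw [← hg, ← Nat.card_zpowers, ← hX, hXtop, Subgroup.card_top]

lemma case1b {p q : ℕ} (hp : p.Prime) (hq : q.Prime) (hpq : p ≠ q) (g : G)
    (hg : orderOf g = p * q)
    (hS : {H : Subgroup G | ¬ IsIsolated H}.ncard = 2) :
    IsCyclic G ∧ Nat.card G = p * q := by
  set X := zpowers g with hX
  set A := zpowers (g ^ p) with hA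
  set B := zpowers (g ^ q) with hB
  have cardX : Nat.card X = p * q := by rw [Nat.card_zpowers, hg]
  have cardA : Nat.card A = q := by
    rw [Nat.card_zpowers, orderOf_pow, hg, Nat.gcd_eq_right (Dvd.intro q rfl),
      Nat.mul_div_cancel_left q hp.pos]
  have cardB : Nat.card B = p := by
    rw [Nat.card_zpowers, orderOf_pow, hg, Nat.gcd_eq_right (Dvd.intro_left p rfl)]
    exact Nat.div_eq_of_eq_mul_left hq.pos (by ring)
  have hp1 := hp.one_lt
  have hq1 := hq.one_lt
  have hABne : A ≠ B := fun h => hpq (by rw [h, cardB] at cardA; exact cardA)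
  have hAX : A ≤ X := zpowers_le.mpr (pow_mem (mem_zpowers g) _)
  have hBX : B ≤ X := zpowers_le.mpr (pow_mem (mem_zpowers g) _)
  have hAS : ¬ IsIsolated A := by
    refine notIsolated_of_lt (x := g) (sub_ne_bot_of_card cardA hq1.ne') (lt_of_le_of_ne hAX ?_)
    intro h; rw [h, cardX] at cardA; nlinarith
  have hBS : ¬ IsIsolated B := by
    refine notIsolated_of_lt (x := g) (sub_ne_bot_of_card cardB hp1.ne') (lt_of_le_of_ne hBX ?_)
    intro h; rw [h, cardX] at cardB; nlinarith
  have hpair := set_pair_eq hS hAS hBS hABne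
  have hmem : ∀ H : Subgroup G, ¬ IsIsolated H → H = A ∨ H = B := by
    intro H h
    have : H ∈ ({A, B} : Set (Subgroup G)) := hpair ▸ h
    simpa using this
  have hXiso : IsIsolated X := by
    by_contra h
    rcases hmem X h with h' | h'
    · rw [h', cardA] at cardX; nlinarith
    · rw [h', cardB] at cardX; nlinarith
  have hBbot : B ≠ ⊥ := sub_ne_bot_of_card cardB hp1.ne'
  have hBfix : ∀ g' : G, cmap g' B = B :=
    cmap_fix_of_card_ne (fun H h => (hmem H h).symm) hBS (by rw [cardB, cardA]; exact hpq)
  have hall : ∀ y : G, y ∈ X := by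
    intro y
    by_contra hy
    have hdisj : zpowers y ⊓ X = ⊥ := by
      rcases hXiso y with h | h
      · exact absurd h hy
      · exact h
    have hr : (orderOf y).Prime := prime_order_outside hmem hAX hBX hdisj hy
    set r := orderOf y with hro
    set H := B ⊔ zpowers y with hH
    have hinf : B ⊓ zpowers y = ⊥ := by
      rw [inf_comm]
      exact le_bot_iff.mp (hdisj ▸ inf_le_inf_left _ hBX)
    have hnorm : zpowers y ≤ (normalizer (B : Set G)) := fun z _ => mem_normalizer_of_cmap (hBfix z)
    have cardH : Nat.card H = p * r := by
      rw [hH, card_sup_of_norm hnorm hinf, cardB, Nat.card_zpowers]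
    have hyH : y ∈ H := (le_sup_right : zpowers y ≤ B ⊔ zpowers y) (mem_zpowers y)
    have hgH : g ∉ H := by
      intro hgmem
      have hdvd : p * q ∣ p * r := by
        rw [← hg, ← cardH]; exact orderOf_dvd_card_of_mem hgmem
      have hqr : q ∣ r := (mul_dvd_mul_iff_left hp.pos.ne').mp hdvd
      have hqr' : q = r := ((Nat.prime_dvd_prime_iff_eq hq hr).mp hqr)
      -- then card H = p * q = card X and X ≤ H, so X = H, contradiction with y ∉ X
      have hXle : X ≤ H := zpowers_le.mpr hgmem
      have hXH : X = H := Subgroup.eq_of_le_of_card_ge hXle (by rw [cardH, cardX, hqr'])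
      exact hy (hXH ▸ hyH)
    have hHS : ¬ IsIsolated H := by
      rw [not_isolated_iff]
      exact ⟨g, hgH, inf_ne_bot_of_le hBX le_sup_left hBbot⟩
    rcases hmem H hHS with h | h
    · exact hy (hAX (h ▸ hyH))
    · exact hy (hBX (h ▸ hyH))
  have hXtop : X = ⊤ := top_eq_of_forall hall
  constructor
  · exact ⟨⟨g, fun z => hall z⟩⟩
  · rw [← hg, ← Nat.card_zpowers, ← hX, hXtop, Subgroup.card_top]

end Part6

section Part7
variable {G : Type*} [Group G] [Finite G]

lemma inf_eq_bot_of_coprime_cards {A B : Subgroup G}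
    (h : Nat.Coprime (Nat.card A) (Nat.card B)) : A ⊓ B = ⊥ := by
  have h1 := card_dvd_of_le (inf_le_left : A ⊓ B ≤ A)
  have h2 := card_dvd_of_le (inf_le_right : A ⊓ B ≤ B)
  exact Subgroup.card_eq_one.mp (Nat.dvd_one.mp (h.gcd_eq_one ▸ Nat.dvd_gcd h1 h2))

lemma extraction
    (hall : ∀ z : G, orderOf z = 1 ∨ (orderOf z).Prime ∨ ∃ r, r.Prime ∧ orderOf z = r ^ 2)
    {M : Subgroup G} (hM : ¬ IsIsolated M) {s : ℕ} (hs : s.Prime)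
    (hcardM : Nat.card M = s) :
    ∃ x : G, orderOf x = s ^ 2 ∧ M = zpowers (x ^ s) ∧ M ≤ zpowers x ∧ x ∉ M := by
  obtain ⟨w, hw, hKb⟩ := not_isolated_iff.mp hM
  set K := zpowers w ⊓ M with hK
  have hKM : K ≤ M := inf_le_right
  have hKw : K ≤ zpowers w := inf_le_left
  have hcardK : Nat.card K = s := by
    have hdvd : Nat.card K ∣ s := hcardM ▸ card_dvd_of_le hKM
    rcases hs.eq_one_or_self_of_dvd _ hdvd with h | h
    · exact absurd (Subgroup.card_eq_one.mp h) hKb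
    · exact h
  have hKMeq : K = M := Subgroup.eq_of_le_of_card_ge hKM (by rw [hcardK, hcardM])
  have hMw : M ≤ zpowers w := hKMeq ▸ hKw
  have hsw : s ∣ orderOf w := by
    rw [← Nat.card_zpowers, ← hcardM]
    exact card_dvd_of_le hMw
  rcases hall w with h | h | ⟨r, hr, h⟩
  · exfalso
    have : w = 1 := orderOf_eq_one_iff.mp h
    rw [hK, this] at hKb
    simp at hKb
  · exfalso
    have hseq : s = orderOf w := by
      rcases h.eq_one_or_self_of_dvd _ hsw with h' | h'
      · exact absurd h' hs.one_lt.ne'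
      · exact h'
    have hMeq : M = zpowers w :=
      Subgroup.eq_of_le_of_card_ge hMw (by rw [hcardM, Nat.card_zpowers, hseq])
    exact hw (by rw [hMeq]; exact mem_zpowers w)
  · have hsr : s = r := by
      have : s ∣ r ^ 2 := h ▸ hsw
      exact (Nat.prime_dvd_prime_iff_eq hs hr).mp (hs.dvd_of_dvd_pow this)
    subst hsr
    refine ⟨w, h, ?_, hMw, hw⟩
    refine eq_of_le_zpowers_card_eq (x := w) hMw
      (zpowers_le.mpr (pow_mem (mem_zpowers w) s)) ?_
    rw [hcardM, Nat.card_zpowers, orderOf_sq_pow hs h]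

lemma exists_prime_member
    (hall : ∀ z : G, orderOf z = 1 ∨ (orderOf z).Prime ∨ ∃ r, r.Prime ∧ orderOf z = r ^ 2)
    {A : Subgroup G} (hA : ¬ IsIsolated A) :
    ∃ P : Subgroup G, ¬ IsIsolated P ∧ (Nat.card P).Prime := by
  obtain ⟨w, hw, hKb⟩ := not_isolated_iff.mp hA
  have hKw : zpowers w ⊓ A ≤ zpowers w := inf_le_left
  rcases hall w with h | h | ⟨r, hr, h⟩
  · exfalso
    have : w = 1 := orderOf_eq_one_iff.mp h
    rw [this] at hKb
    simp at hKb
  · exfalso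
    have hdvd : Nat.card (zpowers w ⊓ A : Subgroup G) ∣ orderOf w := by
      rw [← Nat.card_zpowers]; exact card_dvd_of_le hKw
    have hcard : Nat.card (zpowers w ⊓ A : Subgroup G) = orderOf w := by
      rcases h.eq_one_or_self_of_dvd _ hdvd with h' | h'
      · exact absurd (Subgroup.card_eq_one.mp h') hKb
      · exact h'
    have heq := Subgroup.eq_of_le_of_card_ge hKw (by rw [hcard, Nat.card_zpowers])
    exact hw ((inf_le_right : zpowers w ⊓ A ≤ A) (by rw [heq]; exact mem_zpowers w))
  · refine ⟨zpowers (w ^ r), ?_, ?_⟩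
    · refine notIsolated_of_lt (x := w) ?_
        (lt_of_le_of_ne (zpowers_le.mpr (pow_mem (mem_zpowers w) r)) ?_)
      · exact sub_ne_bot_of_card (by rw [Nat.card_zpowers, orderOf_sq_pow hr h]) hr.one_lt.ne'
      · intro heq
        have : orderOf (w ^ r) = orderOf w := by rw [← Nat.card_zpowers, heq, Nat.card_zpowers]
        rw [orderOf_sq_pow hr h, h] at this
        nlinarith [hr.one_lt]
    · rw [Nat.card_zpowers, orderOf_sq_pow hr h]
      exact hr

lemma soc_notIsolated {p : ℕ} (hp : p.Prime) {z : G} (hz : orderOf z = p ^ 2) :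
    ¬ IsIsolated (zpowers (z ^ p)) := by
  refine notIsolated_of_lt (x := z) ?_
    (lt_of_le_of_ne (zpowers_le.mpr (pow_mem (mem_zpowers z) p)) ?_)
  · exact sub_ne_bot_of_card (by rw [Nat.card_zpowers, orderOf_sq_pow hp hz]) hp.one_lt.ne'
  · intro heq
    have : orderOf (z ^ p) = orderOf z := by rw [← Nat.card_zpowers, heq, Nat.card_zpowers]
    rw [orderOf_sq_pow hp hz, hz] at this
    nlinarith [hp.one_lt]

lemma case2i {A B : Subgroup G}
    (hall : ∀ z : G, orderOf z = 1 ∨ (orderOf z).Prime ∨ ∃ r, r.Prime ∧ orderOf z = r ^ 2)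
    (hmem : ∀ H : Subgroup G, ¬ IsIsolated H → H = A ∨ H = B)
    (hAS : ¬ IsIsolated A) (hBS : ¬ IsIsolated B) (hne : A ≠ B)
    (hAp : (Nat.card A).Prime) (hBp : (Nat.card B).Prime) : False := by
  by_cases hpp : Nat.card A = Nat.card B
  · -- equal primes case
    set p := Nat.card A with hpdef
    obtain ⟨xA, hxAord, hAeq, hAle, hxAM⟩ := extraction hall hAS hAp rfl
    obtain ⟨xB, hxBord, hBeq, hBle, hxBM⟩ := extraction hall hBS hBp rfl
    rw [← hpp] at hxBord hBeq
    have cardB' : Nat.card B = p := hpp.symm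
    have cardXA : Nat.card (zpowers xA) = p ^ 2 := by rw [Nat.card_zpowers, hxAord]
    have cardXB : Nat.card (zpowers xB) = p ^ 2 := by rw [Nat.card_zpowers, hxBord]
    have hp1 := hAp.one_lt
    have hXne : zpowers xA ≠ zpowers xB := by
      intro h
      exact hne (eq_of_le_zpowers_card_eq (x := xA) hAle (h.symm ▸ hBle) (by rw [cardB']))
    have hXAiso : IsIsolated (zpowers xA) := by
      by_contra h
      rcases hmem _ h with h' | h'
      · rw [h'] at cardXA; nlinarith
      · rw [h', cardB'] at cardXA; nlinarith
    have hXBiso : IsIsolated (zpowers xB) := by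
      by_contra h
      rcases hmem _ h with h' | h'
      · rw [h'] at cardXB; nlinarith
      · rw [h', cardB'] at cardXB; nlinarith
    have hAbot : A ≠ ⊥ := sub_ne_bot_of_card rfl hAp.one_lt.ne'
    have hBbot : B ≠ ⊥ := sub_ne_bot_of_card cardB' hAp.one_lt.ne'
    have hp2mem : ∀ z : G, orderOf z = p ^ 2 → z ∈ zpowers xA ∨ z ∈ zpowers xB := by
      intro z hz
      rcases hmem _ (soc_notIsolated hAp hz) with h' | h'
      · left
        by_contra hzX
        have hAz : A ≤ zpowers z := h' ▸ zpowers_le.mpr (pow_mem (mem_zpowers z) p)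
        exact absurd (not_isolated_iff.mpr ⟨z, hzX, inf_ne_bot_of_le hAz hAle hAbot⟩)
          (not_not.mpr hXAiso)
      · right
        by_contra hzX
        have hBz : B ≤ zpowers z := h' ▸ zpowers_le.mpr (pow_mem (mem_zpowers z) p)
        exact absurd (not_isolated_iff.mpr ⟨z, hzX, inf_ne_bot_of_le hBz hBle hBbot⟩)
          (not_not.mpr hXBiso)
    have hstabB : ∀ g : G, cmap g (zpowers xB) = zpowers xB ∨ cmap g (zpowers xB) = zpowers xA := by
      intro g
      have hcord : orderOf (g * xB * g⁻¹) = p ^ 2 := by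
        rw [← Nat.card_zpowers, ← cmap_zpowers, card_cmap, cardXB]
      rcases hp2mem _ hcord with h' | h'
      · right
        rw [cmap_zpowers]
        exact Subgroup.eq_of_le_of_card_ge (zpowers_le.mpr h')
          (by rw [cardXA, Nat.card_zpowers, hcord])
      · left
        rw [cmap_zpowers]
        exact Subgroup.eq_of_le_of_card_ge (zpowers_le.mpr h')
          (by rw [cardXB, Nat.card_zpowers, hcord])
    have hfixB : cmap xA (zpowers xB) = zpowers xB := by
      rcases hstabB xA with h' | h'
      · exact h'
      · exfalso
        have h2 : cmap xA (zpowers xA) = zpowers xA := cmap_self_zpowers xA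
        exact hXne (cmap_inj (h'.trans h2.symm)).symm
    have hnormB : A ≤ (normalizer (B : Set G)) := by
      intro a ha
      obtain ⟨k, hk⟩ := hAle ha
      have hfix : cmap a (zpowers xB) = zpowers xB := hk ▸ cmap_zpow_fix hfixB k
      have hBfix : cmap a B = B := by
        have hle1 : cmap a B ≤ zpowers xB := hfix ▸ cmap_le hBle
        exact eq_of_le_zpowers_card_eq (x := xB) hle1 hBle (by rw [card_cmap])
      exact mem_normalizer_of_cmap hBfix
    have hinfBA : B ⊓ A = ⊥ := by
      by_contra hb
      have hd : Nat.card (B ⊓ A : Subgroup G) ∣ p := card_dvd_of_le (inf_le_right : B ⊓ A ≤ A)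
      have hcard : Nat.card (B ⊓ A : Subgroup G) = p := by
        rcases hAp.eq_one_or_self_of_dvd _ hd with h' | h'
        · exact absurd (Subgroup.card_eq_one.mp h') hb
        · exact h'
      have h1 : B ⊓ A = A := Subgroup.eq_of_le_of_card_ge inf_le_right (by rw [hcard])
      have h2 : A ≤ B := h1 ▸ inf_le_left
      exact hne (Subgroup.eq_of_le_of_card_ge h2 (by rw [cardB']))
    set H' := B ⊔ A with hH'
    have cardH' : Nat.card H' = p * p := by
      rw [hH', card_sup_of_norm hnormB hinfBA, cardB']
    have hxAH : xA ∉ H' := by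
      intro hmem'
      have hXle : zpowers xA ≤ H' := zpowers_le.mpr hmem'
      have hXeq : zpowers xA = H' := Subgroup.eq_of_le_of_card_ge hXle
        (by rw [cardH', cardXA, pow_two])
      have hBle' : B ≤ zpowers xA := hXeq ▸ (le_sup_left : B ≤ B ⊔ A)
      exact hne (eq_of_le_zpowers_card_eq (x := xA) hAle hBle' (by rw [cardB']))
    have hH'S : ¬ IsIsolated H' := by
      rw [not_isolated_iff]
      exact ⟨xA, hxAH, inf_ne_bot_of_le hAle (le_sup_right : A ≤ B ⊔ A) hAbot⟩
    rcases hmem H' hH'S with h' | h'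
    · rw [h'] at cardH'; nlinarith
    · rw [h', cardB'] at cardH'; nlinarith
  · -- distinct primes case
    have hAfix : ∀ g : G, cmap g A = A := cmap_fix_of_card_ne hmem hAS hpp
    have hBfix : ∀ g : G, cmap g B = B :=
      cmap_fix_of_card_ne (fun H h => (hmem H h).symm) hBS (Ne.symm hpp)
    have hNA : A.Normal := normal_of_cmap hAfix
    have hNB : B.Normal := normal_of_cmap hBfix
    have hinf : A ⊓ B = ⊥ :=
      inf_eq_bot_of_coprime_cards ((Nat.coprime_primes hAp hBp).mpr hpp)
    obtain ⟨a, ha, ha1⟩ := sub_ne_bot_iff.mp (sub_ne_bot_of_card (rfl : Nat.card A = _) hAp.one_lt.ne')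
    obtain ⟨b, hb, hb1⟩ := sub_ne_bot_iff.mp (sub_ne_bot_of_card (rfl : Nat.card B = _) hBp.one_lt.ne')
    have haord : orderOf a = Nat.card A := by
      rcases hAp.eq_one_or_self_of_dvd _ (orderOf_dvd_card_of_mem ha) with h | h
      · exact absurd h (orderOf_ne_one ha1)
      · exact h
    have hbord : orderOf b = Nat.card B := by
      rcases hBp.eq_one_or_self_of_dvd _ (orderOf_dvd_card_of_mem hb) with h | h
      · exact absurd h (orderOf_ne_one hb1)
      · exact h
    have hcomm : Commute a b :=
      Subgroup.commute_of_normal_of_disjoint A B hNA hNB (disjoint_iff.mpr hinf) a b ha hb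
    have horder : orderOf (a * b) = Nat.card A * Nat.card B := by
      rw [hcomm.orderOf_mul_eq_mul_orderOf_of_coprime, haord, hbord]
      rw [haord, hbord]; exact (Nat.coprime_primes hAp hBp).mpr hpp
    have hp1 := hAp.one_lt
    have hp2 := hBp.one_lt
    rcases hall (a * b) with h | h | ⟨r, hr, h⟩
    · rw [horder] at h; nlinarith
    · rw [horder] at h
      rcases h.eq_one_or_self_of_dvd (Nat.card A) ⟨Nat.card B, rfl⟩ with h' | h'
      · nlinarith
      · nlinarith
    · rw [horder] at h
      have hd1 : Nat.card A ∣ r ^ 2 := by rw [← h]; exact ⟨Nat.card B, rfl⟩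
      have hd2 : Nat.card B ∣ r ^ 2 := by rw [← h]; exact ⟨Nat.card A, mul_comm _ _⟩
      have h1 : Nat.card A = r := (Nat.prime_dvd_prime_iff_eq hAp hr).mp (hAp.dvd_of_dvd_pow hd1)
      have h2 : Nat.card B = r := (Nat.prime_dvd_prime_iff_eq hBp hr).mp (hBp.dvd_of_dvd_pow hd2)
      exact hpp (h1.trans h2.symm)

end Part7

section Part8
variable {G : Type*} [Group G] [Finite G]

lemma zpowers_pow_le {p : ℕ} (hp : p.Prime) {x : G} (hx : orderOf x = p ^ 2)
    {K : Subgroup G} (hK : K ≤ zpowers x) (hne : K ≠ ⊥) : zpowers (x ^ p) ≤ K := by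
  have hdvd : Nat.card K ∣ p ^ 2 := by
    have h1 : Nat.card K ∣ Nat.card (zpowers x) := card_dvd_of_le hK
    rwa [Nat.card_zpowers, hx] at h1
  obtain ⟨k, hk2, hck⟩ := (Nat.dvd_prime_pow hp).mp hdvd
  interval_cases k
  · exact absurd (Subgroup.card_eq_one.mp (by rw [hck, pow_zero])) hne
  · have heq : K = zpowers (x ^ p) := eq_of_le_zpowers_card_eq (x := x) hK
      (zpowers_le.mpr (pow_mem (mem_zpowers x) p))
      (by rw [hck, pow_one, Nat.card_zpowers, orderOf_sq_pow hp hx])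
    exact le_of_eq heq.symm
  · have heq : K = zpowers x := Subgroup.eq_of_le_of_card_ge hK
      (by rw [hck, Nat.card_zpowers, hx])
    rw [heq]
    exact zpowers_le.mpr (pow_mem (mem_zpowers x) p)

lemma case2ii {A B : Subgroup G}
    (hall : ∀ z : G, orderOf z = 1 ∨ (orderOf z).Prime ∨ ∃ r, r.Prime ∧ orderOf z = r ^ 2)
    (hmem : ∀ H : Subgroup G, ¬ IsIsolated H → H = A ∨ H = B)
    (hAS : ¬ IsIsolated A) (hBS : ¬ IsIsolated B) (hne : A ≠ B)
    (hAp : (Nat.card A).Prime) (hBp : ¬ (Nat.card B).Prime) : False := by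
  set p := Nat.card A with hpdef
  obtain ⟨x, hxord, hAeq, hAle, hxA⟩ := extraction hall hAS hAp rfl
  have hAbot : A ≠ ⊥ := sub_ne_bot_of_card rfl hAp.one_lt.ne'
  have cardX : Nat.card (zpowers x) = p ^ 2 := by rw [Nat.card_zpowers, hxord]
  have hp1 := hAp.one_lt
  have hcardne : Nat.card A ≠ Nat.card B := fun h => hBp (h ▸ hAp)
  have hAfix : ∀ g : G, cmap g A = A := cmap_fix_of_card_ne hmem hAS hcardne
  -- X is isolated
  have hXiso : IsIsolated (zpowers x) := by
    by_contra hX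
    rcases hmem _ hX with h' | h'
    · rw [h'] at cardX; rw [← hpdef] at cardX; nlinarith
    · -- zpowers x = B
      obtain ⟨w, hw, hKb⟩ := not_isolated_iff.mp hBS
      have hwX : w ∉ zpowers x := by rw [h']; exact hw
      have hKle : zpowers w ⊓ B ≤ zpowers x := by rw [h']; exact inf_le_right
      have hAw : A ≤ zpowers w := by
        have hsoc := zpowers_pow_le hAp hxord hKle hKb
        exact le_trans (le_of_eq hAeq) (le_trans hsoc inf_le_left)
      rcases hall w with h1 | h1 | ⟨r, hr, h1⟩
      · rw [orderOf_eq_one_iff.mp h1] at hKb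
        simp at hKb
      · have hpr : p = orderOf w := by
          have hdvd : p ∣ orderOf w := by
            rw [← Nat.card_zpowers]
            exact hpdef ▸ card_dvd_of_le hAw
          rcases h1.eq_one_or_self_of_dvd _ hdvd with h2 | h2
          · exact absurd h2 hAp.one_lt.ne'
          · exact h2
        have : A = zpowers w :=
          Subgroup.eq_of_le_of_card_ge hAw (by rw [Nat.card_zpowers, ← hpr])
        exact hwX (hAle (by rw [this]; exact mem_zpowers w))
      · have hpr : p = r := by
          have hdvd : p ∣ r ^ 2 := by
            rw [← h1, ← Nat.card_zpowers]
            exact hpdef ▸ card_dvd_of_le hAw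
          exact (Nat.prime_dvd_prime_iff_eq hAp hr).mp (hAp.dvd_of_dvd_pow hdvd)
        have cardW : Nat.card (zpowers w) = p ^ 2 := by rw [Nat.card_zpowers, h1, hpr]
        have hxW : x ∉ zpowers w := by
          intro hxw
          have hXW : zpowers x = zpowers w := Subgroup.eq_of_le_of_card_ge
            (zpowers_le.mpr hxw) (by rw [cardW, cardX])
          exact hwX (by rw [hXW]; exact mem_zpowers w)
        have hWS : ¬ IsIsolated (zpowers w) := by
          rw [not_isolated_iff]
          exact ⟨x, hxW, inf_ne_bot_of_le hAle hAw hAbot⟩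
        rcases hmem _ hWS with h2 | h2
        · rw [h2] at cardW; rw [← hpdef] at cardW; nlinarith
        · rw [← h'] at h2
          exact hwX (by rw [← h2]; exact mem_zpowers w)
  -- all elements of order p² lie in zpowers x
  have hp2inX : ∀ z : G, orderOf z = p ^ 2 → z ∈ zpowers x := by
    intro z hz
    have hsoc := soc_notIsolated hAp hz
    have hsocA : zpowers (z ^ p) = A := by
      rcases hmem _ hsoc with h' | h'
      · exact h'
      · exfalso
        apply hBp
        rw [← h', Nat.card_zpowers, orderOf_sq_pow hAp hz]
        exact hAp
    by_contra hzX
    have hAz : A ≤ zpowers z := hsocA ▸ zpowers_le.mpr (pow_mem (mem_zpowers z) p)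
    exact absurd (not_isolated_iff.mpr ⟨z, hzX, inf_ne_bot_of_le hAz hAle hAbot⟩)
      (not_not.mpr hXiso)
  -- zpowers x is conjugation-stable
  have hXfix : ∀ g : G, cmap g (zpowers x) = zpowers x := by
    intro g
    have hcord : orderOf (g * x * g⁻¹) = p ^ 2 := by
      rw [← Nat.card_zpowers, ← cmap_zpowers, card_cmap, cardX]
    rw [cmap_zpowers]
    exact Subgroup.eq_of_le_of_card_ge (zpowers_le.mpr (hp2inX _ hcord))
      (by rw [cardX, Nat.card_zpowers, hcord])
  by_cases hq : ∃ y : G, (orderOf y).Prime ∧ orderOf y ≠ p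
  · -- beta case: a prime order q ≠ p exists
    obtain ⟨y, hyq, hyne⟩ := hq
    set q := orderOf y with hqdef
    have hqp : p ≠ q := fun h => hyne h.symm
    have hcop : Nat.Coprime p q := (Nat.coprime_primes hAp hyq).mpr hqp
    have hnormA : ∀ z : G, z ∈ (normalizer (A : Set G)) := fun z => mem_normalizer_of_cmap (hAfix z)
    have hABy : ∀ y' : G, orderOf y' = q → A ⊔ zpowers y' = B := by
      intro y' hy'
      have hinf' : A ⊓ zpowers y' = ⊥ := by
        refine inf_eq_bot_of_coprime_cards ?_
        rw [← hpdef, Nat.card_zpowers, hy']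
        exact hcop
      have hcard' : Nat.card (A ⊔ zpowers y' : Subgroup G) = p * q := by
        rw [card_sup_of_norm (fun z _ => hnormA z) hinf', ← hpdef, Nat.card_zpowers, hy']
      have hx' : x ∉ (A ⊔ zpowers y' : Subgroup G) := by
        intro hxmem
        have hdvd : p ^ 2 ∣ p * q := by
          rw [← hxord, ← hcard']
          exact orderOf_dvd_card_of_mem hxmem
        have : p ∣ q := by
          have h2 : p * p ∣ p * q := by rwa [← pow_two]
          exact (mul_dvd_mul_iff_left hAp.pos.ne').mp h2
        exact hqp ((Nat.prime_dvd_prime_iff_eq hAp hyq).mp this)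
      have hS' : ¬ IsIsolated (A ⊔ zpowers y' : Subgroup G) := by
        rw [not_isolated_iff]
        exact ⟨x, hx', inf_ne_bot_of_le hAle le_sup_left hAbot⟩
      rcases hmem _ hS' with h' | h'
      · exfalso
        have := hpdef ▸ (h' ▸ hcard')
        nlinarith [hyq.one_lt, hAp.pos]
      · exact h'
    have hBeq' : A ⊔ zpowers y = B := hABy y rfl
    have cardB : Nat.card B = p * q := by
      rw [← hBeq', card_sup_of_norm (fun z _ => hnormA z) (inf_eq_bot_of_coprime_cards
        (by rw [← hpdef, Nat.card_zpowers]; exact hcop)), ← hpdef, Nat.card_zpowers]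
    have hBfix : ∀ g : G, cmap g B = B := by
      intro g
      have hcord : orderOf (g * y * g⁻¹) = q := by
        rw [← Nat.card_zpowers, ← cmap_zpowers, card_cmap, Nat.card_zpowers]
      rw [← hBeq', cmap_sup, hAfix, cmap_zpowers]
      rw [hBeq']
      exact hABy _ hcord
    have hBXinf : A = B ⊓ zpowers x := by
      refine Subgroup.eq_of_le_of_card_ge (le_inf (hBeq' ▸ (le_sup_left : A ≤ A ⊔ zpowers y)) hAle) ?_
      have hd1 : Nat.card (B ⊓ zpowers x : Subgroup G) ∣ p * q :=
        cardB ▸ card_dvd_of_le inf_le_left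
      have hd2 : Nat.card (B ⊓ zpowers x : Subgroup G) ∣ p * p := by
        have := cardX ▸ card_dvd_of_le (inf_le_right : B ⊓ zpowers x ≤ zpowers x)
        rwa [pow_two] at this
      have hgcd : Nat.gcd (p * q) (p * p) = p := by
        rw [Nat.gcd_mul_left, Nat.Coprime.gcd_eq_one (Nat.coprime_comm.mp hcop), mul_one]
      have hdp : Nat.card (B ⊓ zpowers x : Subgroup G) ∣ p := hgcd ▸ Nat.dvd_gcd hd1 hd2
      rw [← hpdef]
      exact Nat.le_of_dvd hAp.pos hdp
    -- conjugation computation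
    have hconjX : y⁻¹ * x * y ∈ zpowers x := by
      have := conj_mem_of_cmap (hXfix y⁻¹) (mem_zpowers x)
      rwa [inv_inv] at this
    obtain ⟨m, hm⟩ := mem_zpowers_iff.mp hconjX
    have hyB : y ∈ B := hBeq' ▸ (le_sup_right : zpowers y ≤ A ⊔ zpowers y) (mem_zpowers y)
    have hconjB : x * y * x⁻¹ ∈ B := conj_mem_of_cmap (hBfix x) hyB
    have hxm1B : x ^ (m - 1) ∈ B := by
      have heq : x ^ (m - 1) = y⁻¹ * (x * y * x⁻¹) := by
        have h2 : y⁻¹ * (x * y * x⁻¹) = (y⁻¹ * x * y) * x⁻¹ := by group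
        rw [h2, ← hm, zpow_sub_one]
      rw [heq]
      exact B.mul_mem (B.inv_mem hyB) hconjB
    have hxm1A : x ^ (m - 1) ∈ A := by
      rw [hBXinf]
      exact ⟨hxm1B, zpow_mem (mem_zpowers x) _⟩
    have hdvd1 : (p : ℤ) ∣ (m - 1) := by
      have h1 : orderOf (x ^ (m - 1)) ∣ p := hpdef ▸ orderOf_dvd_card_of_mem hxm1A
      have h2 : (x ^ (m - 1)) ^ (p : ℕ) = 1 := orderOf_dvd_iff_pow_eq_one.mp h1
      have h3 : x ^ ((m - 1) * (p : ℤ)) = 1 := by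
        rw [zpow_mul, zpow_natCast]
        exact h2
      have h4 : ((p : ℕ) ^ 2 : ℤ) ∣ (m - 1) * (p : ℤ) := by
        have := orderOf_dvd_iff_zpow_eq_one.mpr h3
        rwa [hxord] at this
      have h5 : (p : ℤ) * (p : ℤ) ∣ (m - 1) * (p : ℤ) := by
        have e : ((p : ℕ) ^ 2 : ℤ) = (p : ℤ) * (p : ℤ) := by push_cast; ring
        rwa [e] at h4
      exact (mul_dvd_mul_iff_right (by exact_mod_cast hAp.pos.ne' : (p : ℤ) ≠ 0)).mp h5
    obtain ⟨t, ht⟩ := hdvd1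
    have hmq : ((p : ℤ)) ^ 2 ∣ m ^ q - 1 := by
      have hconj := conj_pow_lemma hm.symm q
      have hyq1 : y ^ q = 1 := by rw [hqdef]; exact pow_orderOf_eq_one y
      have hinv1 : (y⁻¹) ^ q = 1 := by rw [inv_pow, hyq1, inv_one]
      rw [hyq1, hinv1, one_mul, mul_one] at hconj
      have h3 : x ^ (m ^ q - 1) = 1 := by
        rw [zpow_sub, zpow_one, ← hconj, mul_inv_cancel]
      have h4 := orderOf_dvd_iff_zpow_eq_one.mpr h3
      rw [hxord] at h4
      exact_mod_cast h4
    have hpt : (p : ℤ) ∣ t := by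
      have hm1 : m = 1 + (p : ℤ) * t := by linarith [ht]
      refine dvd_of_binom hAp hyq hqp ?_
      rw [← hm1]
      exact hmq
    obtain ⟨s, hs⟩ := hpt
    have hxm : x ^ (m - 1) = 1 := by
      rw [← orderOf_dvd_iff_zpow_eq_one, hxord]
      rw [ht, hs]
      exact ⟨s, by push_cast; ring⟩
    have heq2 : y⁻¹ * x * y = x := by
      rw [← hm]
      have : x ^ m = x ^ (m - 1) * x := by rw [zpow_sub_one]; group
      rw [this, hxm, one_mul]
    have hcomm : Commute x y := by
      have h2 : y * (y⁻¹ * x * y) = y * x := congrArg (y * ·) heq2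
      have h3 : y * (y⁻¹ * x * y) = x * y := by group
      exact h3.symm.trans h2
    have hord2 : orderOf (x * y) = p ^ 2 * q := by
      rw [hcomm.orderOf_mul_eq_mul_orderOf_of_coprime, hxord]
      rw [hxord]
      exact Nat.Coprime.pow_left 2 hcop
    have hq1 := hyq.one_lt
    rcases hall (x * y) with h | h | ⟨r, hr, h⟩
    · rw [hord2] at h; nlinarith
    · rw [hord2] at h
      have hdp : p ∣ p ^ 2 * q := Dvd.dvd.mul_right (dvd_pow_self p two_ne_zero) q
      rcases h.eq_one_or_self_of_dvd p hdp with h' | h'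
      · nlinarith
      · nlinarith
    · rw [hord2] at h
      have hd1 : p ∣ r ^ 2 := by
        rw [← h]
        exact Dvd.dvd.mul_right (dvd_pow_self p two_ne_zero) q
      have hpr : p = r := (Nat.prime_dvd_prime_iff_eq hAp hr).mp (hAp.dvd_of_dvd_pow hd1)
      rw [← hpr] at h
      have hq1' : q = 1 := by
        have hppos : 0 < p ^ 2 := by positivity
        exact Nat.eq_of_mul_eq_mul_left hppos (by rw [mul_one]; exact h)
      nlinarith
  · -- alpha case : all elements outside zpowers x have order p
    push_neg at hq
    have houtp : ∀ y : G, y ∉ zpowers x → orderOf y = p := by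
      intro y hy
      have hy1 : y ≠ 1 := fun h => hy (h ▸ (zpowers x).one_mem)
      rcases hall y with h | h | ⟨r, hr, h⟩
      · exact absurd h (orderOf_ne_one hy1)
      · exact hq y h
      · exfalso
        have hsoc := soc_notIsolated hr h
        have hpr : r = p := by
          rcases hmem _ hsoc with h' | h'
          · have hcr : Nat.card (zpowers (y ^ r)) = r := by
              rw [Nat.card_zpowers, orderOf_sq_pow hr h]
            rw [h'] at hcr
            exact (hpdef.trans hcr).symm
          · exfalso
            apply hBp
            rw [← h', Nat.card_zpowers, orderOf_sq_pow hr h]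
            exact hr
        exact hy (hp2inX y (by rw [h, hpr]))
    have hex : ∃ y0 : G, y0 ∉ zpowers x := by
      by_contra hno
      push_neg at hno
      have hBle : B ≤ zpowers x := fun b _ => hno b
      have hBbot : B ≠ ⊥ := fun h => hBS (h ▸ isIsolated_bot)
      have hdvd : Nat.card B ∣ p ^ 2 := cardX ▸ card_dvd_of_le hBle
      obtain ⟨k, hk2, hck⟩ := (Nat.dvd_prime_pow hAp).mp hdvd
      interval_cases k
      · exact hBbot (Subgroup.card_eq_one.mp (by rw [hck, pow_zero]))
      · exact hBp (by rw [hck, pow_one]; exact hAp)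
      · have : B = zpowers x := Subgroup.eq_of_le_of_card_ge hBle (by rw [hck, cardX])
        exact absurd (this ▸ hBS) (not_not.mpr hXiso)
    obtain ⟨y0, hy0⟩ := hex
    have hinfp : ∀ y : G, y ∉ zpowers x → A ⊓ zpowers y = ⊥ := by
      intro y hy
      by_contra hb
      have hd : Nat.card (A ⊓ zpowers y : Subgroup G) ∣ p := card_dvd_of_le inf_le_left
      have hcard : Nat.card (A ⊓ zpowers y : Subgroup G) = p := by
        rcases hAp.eq_one_or_self_of_dvd _ hd with h' | h'
        · exact absurd (Subgroup.card_eq_one.mp h') hb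
        · exact h'
      have h1 : A ⊓ zpowers y = A := Subgroup.eq_of_le_of_card_ge inf_le_left (by rw [hcard])
      have h2 : A ≤ zpowers y := h1 ▸ inf_le_right
      have h3 : A = zpowers y := Subgroup.eq_of_le_of_card_ge h2
        (by rw [Nat.card_zpowers, houtp y hy, ← hpdef])
      exact hy (hAle (by rw [h3]; exact mem_zpowers y))
    have hnormA : ∀ z : G, z ∈ (normalizer (A : Set G)) := fun z => mem_normalizer_of_cmap (hAfix z)
    have hB0 : ∀ y : G, y ∉ zpowers x → A ⊔ zpowers y = B := by
      intro y hy
      have hcard' : Nat.card (A ⊔ zpowers y : Subgroup G) = p * p := by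
        rw [card_sup_of_norm (fun z _ => hnormA z) (hinfp y hy), ← hpdef, Nat.card_zpowers,
          houtp y hy]
      have hx' : x ∉ (A ⊔ zpowers y : Subgroup G) := by
        intro hxmem
        have hXle : zpowers x ≤ A ⊔ zpowers y := zpowers_le.mpr hxmem
        have hXeq : zpowers x = A ⊔ zpowers y := Subgroup.eq_of_le_of_card_ge hXle
          (by rw [hcard', cardX, pow_two])
        exact hy (by rw [hXeq]; exact (le_sup_right : zpowers y ≤ A ⊔ zpowers y) (mem_zpowers y))
      have hS' : ¬ IsIsolated (A ⊔ zpowers y : Subgroup G) := by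
        rw [not_isolated_iff]
        exact ⟨x, hx', inf_ne_bot_of_le hAle le_sup_left hAbot⟩
      rcases hmem _ hS' with h' | h'
      · exfalso
        have := hpdef ▸ (h' ▸ hcard')
        nlinarith
      · exact h'
    have hy0B : y0 ∈ B := by
      rw [← hB0 y0 hy0]
      exact (le_sup_right : zpowers y0 ≤ A ⊔ zpowers y0) (mem_zpowers y0)
    have hxB : x ∉ B := by
      intro hxmem
      have hXle : zpowers x ≤ B := zpowers_le.mpr hxmem
      have hcardB : Nat.card B = p * p := by
        rw [← hB0 y0 hy0, card_sup_of_norm (fun z _ => hnormA z) (hinfp y0 hy0), ← hpdef,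
          Nat.card_zpowers, houtp y0 hy0]
      have hXeq : zpowers x = B := Subgroup.eq_of_le_of_card_ge hXle
        (by rw [hcardB, cardX, pow_two])
      exact absurd (hXeq ▸ hBS) (not_not.mpr hXiso)
    by_cases hz : x * y0 ∈ zpowers x
    · exact hy0 (by
        have : y0 = x⁻¹ * (x * y0) := by group
        rw [this]
        exact mul_mem (inv_mem (mem_zpowers x)) hz)
    · have hzB : x * y0 ∈ B := by
        rw [← hB0 _ hz]
        exact (le_sup_right : zpowers (x * y0) ≤ A ⊔ zpowers (x * y0)) (mem_zpowers _)
      apply hxB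
      have : x = (x * y0) * y0⁻¹ := by group
      rw [this]
      exact B.mul_mem hzB (B.inv_mem hy0B)

end Part8

section Part9
variable {G : Type*} [Group G] [Finite G]

lemma case2
    (hall : ∀ z : G, orderOf z = 1 ∨ (orderOf z).Prime ∨ ∃ r, r.Prime ∧ orderOf z = r ^ 2)
    (hS : {H : Subgroup G | ¬ IsIsolated H}.ncard = 2) : False := by
  obtain ⟨A, B, hne, hpair⟩ := Set.ncard_eq_two.mp hS
  have hmem : ∀ H : Subgroup G, ¬ IsIsolated H → H = A ∨ H = B := by
    intro H h
    have : H ∈ ({A, B} : Set (Subgroup G)) := hpair ▸ h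
    simpa using this
  have hAS : ¬ IsIsolated A :=
    (show A ∈ {H : Subgroup G | ¬ IsIsolated H} by rw [hpair]; exact Set.mem_insert _ _)
  have hBS : ¬ IsIsolated B :=
    (show B ∈ {H : Subgroup G | ¬ IsIsolated H} by
      rw [hpair]; exact Set.mem_insert_of_mem _ rfl)
  obtain ⟨P, hPS, hPp⟩ := exists_prime_member hall hAS
  by_cases hA : (Nat.card A).Prime <;> by_cases hB : (Nat.card B).Prime
  · exact case2i hall hmem hAS hBS hne hA hB
  · exact case2ii hall hmem hAS hBS hne hA hB
  · exact case2ii hall (fun H h => (hmem H h).symm) hBS hAS hne.symm hB hA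
  · rcases hmem P hPS with h | h
    · exact hA (h ▸ hPp)
    · exact hB (h ▸ hPp)

end Part9

theorem stmt_2 {G : Type*} [Group G] [Finite G] :
    {H : Subgroup G | ¬ IsIsolated H}.ncard = 2 ↔
      ((∃ p : ℕ, p.Prime ∧ IsCyclic G ∧ Nat.card G = p ^ 3) ∨
        (∃ p q : ℕ, p.Prime ∧ q.Prime ∧ p ≠ q ∧ IsCyclic G ∧ Nat.card G = p * q)) := by
  constructor
  · intro hS
    by_cases h1 : ∃ (g : G) (p : ℕ), p.Prime ∧ orderOf g = p ^ 3
    · obtain ⟨g, p, hp, hg⟩ := h1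
      obtain ⟨hc, hcard⟩ := case1a hp g hg hS
      exact Or.inl ⟨p, hp, hc, hcard⟩
    · by_cases h2 : ∃ (g : G) (p q : ℕ), p.Prime ∧ q.Prime ∧ p ≠ q ∧ orderOf g = p * q
      · obtain ⟨g, p, q, hp, hq, hpq, hg⟩ := h2
        obtain ⟨hc, hcard⟩ := case1b hp hq hpq g hg hS
        exact Or.inr ⟨p, q, hp, hq, hpq, hc, hcard⟩
      · exfalso
        apply case2 ?_ hS
        intro z
        rcases nat_case_split (orderOf z) (orderOf_pos z).ne' with
          h | h | h | ⟨p, hp, hd⟩ | ⟨p, q, hp, hq, hpq, hd⟩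
        · exact Or.inl h
        · exact Or.inr (Or.inl h)
        · exact Or.inr (Or.inr h)
        · exact absurd ⟨z ^ (orderOf z / p ^ 3), p, hp,
            orderOf_pow_div hd (pow_pos hp.pos 3).ne'⟩ h1
        · exact absurd ⟨z ^ (orderOf z / (p * q)), p, q, hp, hq, hpq,
            orderOf_pow_div hd (Nat.mul_pos hp.pos hq.pos).ne'⟩ h2
  · rintro (⟨p, hp, hc, hcard⟩ | ⟨p, q, hp, hq, hpq, hc, hcard⟩)
    · exact backward_p3 hp hc hcard
    · exact backward_pq hp hq hpq hc hcard
end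

section
/- For every positive integer k there exists a finite group having exactly k non-isolated subgroups. -/
open Subgroup

lemma pow_card_subgroup_eq_one {G : Type*} [Group G] {K : Subgroup G} {x : G} (hx : x ∈ K) :
    x ^ Nat.card K = 1 := by
  have h : (⟨x, hx⟩ : K) ^ Nat.card K = 1 := pow_card_eq_one'
  have h2 := Subtype.ext_iff.mp h
  simp only [SubgroupClass.coe_pow, OneMemClass.coe_one] at h2
  exact h2

lemma le_of_card_dvd_aux {G : Type*} [Group G] [Finite G] [IsCyclic G]
    {H K : Subgroup G} (h : Nat.card H ∣ Nat.card K) : H ≤ K := by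
  classical
  cases nonempty_fintype G
  set d := Nat.card K with hd
  have hd0 : 0 < d := Nat.card_pos
  have hKsub : K.carrier.toFinset ⊆ Finset.univ.filter (fun a : G => a ^ d = 1) := by
    intro x hx
    simp only [Set.mem_toFinset] at hx
    simp only [Finset.mem_filter, Finset.mem_univ, true_and]
    exact pow_card_subgroup_eq_one hx
  have hcard : (Finset.univ.filter (fun a : G => a ^ d = 1)).card ≤ d := by
    simpa using IsCyclic.card_pow_eq_one_le (α := G) hd0
  have hcard2 : K.carrier.toFinset.card = d := by
    rw [Set.toFinset_card, ← Nat.card_eq_fintype_card]; rfl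
  have hle : (Finset.univ.filter (fun a : G => a ^ d = 1)).card ≤ K.carrier.toFinset.card :=
    le_trans hcard (le_of_eq hcard2.symm)
  have heq := Finset.eq_of_subset_of_card_le hKsub hle
  intro x hx
  obtain ⟨m, hm⟩ := h
  have hxd : x ^ d = 1 := by
    rw [hm, pow_mul, pow_card_subgroup_eq_one hx, one_pow]
  have : x ∈ K.carrier.toFinset := by
    rw [heq]; simp [hxd]
  simpa [Set.mem_toFinset] using this

theorem stmt_5 (k : ℕ) (hk : 0 < k) :
    ∃ (G : Type) (_ : Group G) (_ : Finite G),
      {H : Subgroup G | ¬ IsIsolated H}.ncard = k := by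
  haveI : NeZero (2 ^ (k + 1)) := ⟨by positivity⟩
  haveI : Fact (Nat.Prime 2) := ⟨Nat.prime_two⟩
  refine ⟨Multiplicative (ZMod (2 ^ (k + 1))), inferInstance, inferInstance, ?_⟩
  set G := Multiplicative (ZMod (2 ^ (k + 1))) with hG
  have hcardG : Nat.card G = 2 ^ (k + 1) := by
    rw [show Nat.card G = Nat.card (ZMod (2 ^ (k + 1))) from
      Nat.card_congr Multiplicative.ofAdd.symm, Nat.card_zmod]
  have htot : ∀ H K : Subgroup G, H ≤ K ∨ K ≤ H := by
    intro H K
    have hH := Subgroup.card_subgroup_dvd_card H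
    have hK := Subgroup.card_subgroup_dvd_card K
    rw [hcardG] at hH hK
    obtain ⟨a, _, ha⟩ := (Nat.dvd_prime_pow Nat.prime_two).mp hH
    obtain ⟨b, _, hb⟩ := (Nat.dvd_prime_pow Nat.prime_two).mp hK
    rcases le_total a b with hab | hab
    · exact Or.inl (le_of_card_dvd_aux (by rw [ha, hb]; exact pow_dvd_pow 2 hab))
    · exact Or.inr (le_of_card_dvd_aux (by rw [ha, hb]; exact pow_dvd_pow 2 hab))
  have hset : {H : Subgroup G | ¬ IsIsolated H} = {H | H ≠ ⊥ ∧ H ≠ ⊤} := by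
    ext H
    simp only [Set.mem_setOf_eq]
    constructor
    · intro hni
      constructor
      · rintro rfl; exact hni fun x => Or.inr (by simp)
      · rintro rfl; exact hni fun x => Or.inl trivial
    · rintro ⟨hb, ht⟩ hiso
      obtain ⟨x, hx⟩ : ∃ x, x ∉ H := by
        by_contra hc
        push_neg at hc
        exact ht ((Subgroup.eq_top_iff' H).mpr hc)
      rcases hiso x with h1 | h2
      · exact hx h1
      · rcases htot (Subgroup.zpowers x) H with hle | hle
        · exact hx (hle (Subgroup.mem_zpowers x))
        · rw [inf_eq_right.mpr hle] at h2
          exact hb h2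
  have hinj : Function.Injective (fun H : Subgroup G => Nat.card H) := by
    intro H K h
    simp only at h
    exact le_antisymm (le_of_card_dvd_aux (dvd_of_eq h)) (le_of_card_dvd_aux (dvd_of_eq h.symm))
  have himg : (fun H : Subgroup G => Nat.card H) '' {H | H ≠ ⊥ ∧ H ≠ ⊤}
      = (fun i => 2 ^ i) '' Set.Ioo 0 (k + 1) := by
    ext m
    constructor
    · rintro ⟨H, ⟨hb, ht⟩, rfl⟩
      have hH := Subgroup.card_subgroup_dvd_card H
      rw [hcardG] at hH
      obtain ⟨a, hale, hae⟩ := (Nat.dvd_prime_pow Nat.prime_two).mp hH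
      refine ⟨a, ⟨?_, ?_⟩, hae.symm⟩
      · rcases Nat.eq_zero_or_pos a with h | h
        · exfalso; apply hb; rw [← Subgroup.card_eq_one, hae, h, pow_zero]
        · exact h
      · rcases lt_or_eq_of_le hale with h | h
        · exact h
        · exfalso; apply ht
          rw [← Subgroup.card_eq_iff_eq_top, hae, h, hcardG]
    · rintro ⟨i, ⟨hi0, hik⟩, rfl⟩
      obtain ⟨K, hK⟩ := Sylow.exists_subgroup_card_pow_prime (G := G) 2 (n := i)
        (by rw [hcardG]; exact pow_dvd_pow 2 (le_of_lt hik))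
      refine ⟨K, ⟨?_, ?_⟩, hK⟩
      · intro h
        rw [← Subgroup.card_eq_one, hK] at h
        have : i = 0 := by
          by_contra hi
          have := Nat.one_lt_two_pow (n := i) hi
          omega
        omega
      · intro h
        have : Nat.card K = Nat.card G := (Subgroup.card_eq_iff_eq_top K).mpr h
        rw [hK, hcardG] at this
        have := Nat.pow_right_injective (le_refl 2) this
        omega
  have h1 : {H : Subgroup G | H ≠ ⊥ ∧ H ≠ ⊤}.ncard
      = ((fun i => 2 ^ i) '' Set.Ioo 0 (k + 1)).ncard := by
    rw [← himg, Set.ncard_image_of_injective _ hinj]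
  rw [hset, h1, Set.ncard_image_of_injective _ (Nat.pow_right_injective (le_refl 2)),
    ← Finset.coe_Ioo, Set.ncard_coe_finset, Nat.card_Ioo]
  omega
end

section
/- Let G be a finite group having exactly one non-isolated subgroup H₀. Then H₀ has prime order. -/
theorem stmt_8 {G : Type*} [Group G] [Finite G] (H₀ : Subgroup G)
    (h : {H : Subgroup G | ¬ IsIsolated H} = {H₀}) : (Nat.card H₀).Prime := by
  have h0 : ¬ IsIsolated H₀ := by
    have : H₀ ∈ {H : Subgroup G | ¬ IsIsolated H} := by rw [h]; rfl
    exact this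
  have huniq : ∀ K : Subgroup G, ¬ IsIsolated K → K = H₀ := fun K hK => by
    have : K ∈ ({H₀} : Set (Subgroup G)) := h ▸ hK
    exact this
  simp only [IsIsolated, not_forall, not_or] at h0
  obtain ⟨x, hx1, hx2⟩ := h0
  -- the subgroup `zpowers x ⊓ H₀` is non-isolated, hence equals `H₀`
  have hC : Subgroup.zpowers x ⊓ H₀ = H₀ := by
    apply huniq
    intro hiso
    rcases hiso x with hmem | heq
    · exact hx1 hmem.2
    · rw [← inf_assoc, inf_idem] at heq
      exact hx2 heq
  have hle : H₀ ≤ Subgroup.zpowers x := by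
    conv_lhs => rw [← hC]
    exact inf_le_left
  -- H₀ is nontrivial
  have hne : Nat.card H₀ ≠ 1 := by
    intro h1
    exact hx2 (by rw [hC]; exact Subgroup.eq_bot_of_card_eq H₀ h1)
  obtain ⟨p, hp, hdvd⟩ := Nat.exists_prime_and_dvd hne
  haveI := Fact.mk hp
  obtain ⟨g, hg⟩ := exists_prime_orderOf_dvd_card' (G := H₀) p hdvd
  have hgo : orderOf (g : G) = p := by rw [Subgroup.orderOf_coe]; exact hg
  have hKle : Subgroup.zpowers (g : G) ≤ H₀ := Subgroup.zpowers_le.mpr g.2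
  have hKcard : Nat.card (Subgroup.zpowers (g : G)) = p := by
    rw [Nat.card_zpowers, hgo]
  have hK : Subgroup.zpowers (g : G) = H₀ := by
    apply huniq
    intro hiso
    rcases hiso x with hmem | heq
    · exact hx1 (hKle hmem)
    · rw [inf_eq_right.mpr (hKle.trans hle)] at heq
      rw [heq, Subgroup.card_bot] at hKcard
      exact hp.ne_one hKcard.symm
  rw [← hK, hKcard]
  exact hp
end

section
/- Let G be a finite group having exactly one non-isolated subgroup H₀, and let a ∈ G with a ∉ H₀ and ⟨a⟩ ∩ H₀ ≠ 1. Then H₀ is contained in ⟨a⟩ and ⟨a⟩ has order p², where p = |H₀|. -/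
/-- Core lemma: given suitable arithmetic data, the subgroup `⟨a^(n/e)⟩`
(the subgroup of order `e` of `⟨a⟩`) is non-isolated. -/
lemma core_nonisolated {G : Type*} [Group G] (a : G) (n p t e : ℕ)
    (hn : orderOf a = n) (hn0 : n ≠ 0) (hp1 : 1 < p) (htn : t ∣ n) (hpt : p ∣ t)
    (hpe : p ∣ e) (hen : e ∣ n) (hte : ¬ t ∣ e) :
    ¬ IsIsolated (Subgroup.zpowers (a ^ (n / e))) := by
  subst hn
  set n := orderOf a with hn
  intro hiso
  have ht0 : t ≠ 0 := by rintro rfl; exact hn0 (zero_dvd_iff.mp htn)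
  have hp0 : p ≠ 0 := by omega
  have he0 : e ≠ 0 := by rintro rfl; exact hn0 (zero_dvd_iff.mp hen)
  rcases hiso (a ^ (n / t)) with hmem | hbot
  · -- membership would force `t ∣ e`
    obtain ⟨j, hj⟩ := hmem
    have hj' : (a ^ (n / e)) ^ j = a ^ (n / t) := hj
    apply hte
    have h1 : (a ^ (n / t)) ^ e = 1 := by
      calc (a ^ (n / t)) ^ e = ((a ^ (n / e)) ^ j) ^ (e : ℤ) := by rw [hj', zpow_natCast]
        _ = ((a ^ (n / e)) ^ (e : ℤ)) ^ j := by rw [← zpow_mul, ← zpow_mul, mul_comm]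
        _ = 1 := by
            rw [zpow_natCast, ← pow_mul, Nat.div_mul_cancel hen, pow_orderOf_eq_one, one_zpow]
    have h2 : n ∣ (n / t) * e := orderOf_dvd_of_pow_eq_one (by rwa [pow_mul])
    have hnt0 : n / t ≠ 0 :=
      (Nat.div_pos (Nat.le_of_dvd (Nat.pos_of_ne_zero hn0) htn) (Nat.pos_of_ne_zero ht0)).ne'
    have h3 : (n / t) * t ∣ (n / t) * e := by rwa [Nat.div_mul_cancel htn]
    exact (mul_dvd_mul_iff_left hnt0).mp h3
  · -- but `a^(n/p)` is a nontrivial element of the intersection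
    have hpn : p ∣ n := hpe.trans hen
    obtain ⟨u, hu⟩ := htn
    obtain ⟨v, hv⟩ := hpt
    obtain ⟨w, hw⟩ := hpe
    obtain ⟨s, hs⟩ := hen
    have hy1 : a ^ (n / p) ∈ Subgroup.zpowers (a ^ (n / t)) := by
      refine ⟨((t / p : ℕ) : ℤ), ?_⟩
      show (a ^ (n / t)) ^ ((t / p : ℕ) : ℤ) = a ^ (n / p)
      rw [zpow_natCast, ← pow_mul]
      congr 1
      have hv0 : 0 < v := Nat.pos_of_ne_zero (by rintro rfl; exact ht0 (by rw [hv, mul_zero]))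
      have hpp : 0 < p := by omega
      have hpv : 0 < p * v := by positivity
      rw [hu, hv, Nat.mul_div_cancel_left u hpv, Nat.mul_div_cancel_left v hpp,
        mul_assoc, Nat.mul_div_cancel_left (v * u) hpp, mul_comm]
    have hy2 : a ^ (n / p) ∈ Subgroup.zpowers (a ^ (n / e)) := by
      refine ⟨((e / p : ℕ) : ℤ), ?_⟩
      show (a ^ (n / e)) ^ ((e / p : ℕ) : ℤ) = a ^ (n / p)
      rw [zpow_natCast, ← pow_mul]
      congr 1
      have hw0 : 0 < w := Nat.pos_of_ne_zero (by rintro rfl; exact he0 (by rw [hw, mul_zero]))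
      have hpp : 0 < p := by omega
      have hpw : 0 < p * w := by positivity
      rw [hs, hw, Nat.mul_div_cancel_left s hpw, Nat.mul_div_cancel_left w hpp,
        mul_assoc, Nat.mul_div_cancel_left (w * s) hpp, mul_comm]
    have hy3 : a ^ (n / p) ≠ 1 := by
      intro h1
      have hdvd : n ∣ n / p := orderOf_dvd_of_pow_eq_one h1
      have hlt : n / p < n := Nat.div_lt_self (by omega) hp1
      have hpos : 0 < n / p := Nat.div_pos (Nat.le_of_dvd (by omega) hpn) (by omega)
      have := Nat.le_of_dvd hpos hdvd
      omega
    have hmem : a ^ (n / p) ∈ (⊥ : Subgroup G) :=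
      hbot ▸ (Subgroup.mem_inf.mpr ⟨hy1, hy2⟩)
    exact hy3 (Subgroup.mem_bot.mp hmem)

lemma exists_pt (n e : ℕ) (hn0 : n ≠ 0) (hen : e ∣ n) (he1 : e ≠ 1) (hene : e ≠ n) :
    ∃ p t, 1 < p ∧ t ∣ n ∧ p ∣ t ∧ p ∣ e ∧ ¬ t ∣ e := by
  have he0 : e ≠ 0 := by rintro rfl; exact hn0 (zero_dvd_iff.mp hen)
  by_cases hc : ∃ p, p.Prime ∧ p ∣ e ∧ ¬ p ^ n.factorization p ∣ e
  · obtain ⟨p, hp, hpe, hnd⟩ := hc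
    have hpn : p ∣ n := hpe.trans hen
    have hfp : n.factorization p ≠ 0 := by
      have := (Nat.Prime.factorization_pos_of_dvd hp hn0 hpn)
      omega
    exact ⟨p, p ^ n.factorization p, hp.one_lt, Nat.ordProj_dvd n p,
      dvd_pow_self p hfp, hpe, hnd⟩
  · push_neg at hc
    have hq : ∃ q, q.Prime ∧ q ∣ n ∧ ¬ q ∣ e := by
      by_contra h'
      push_neg at h'
      have hne : n ∣ e := by
        rw [← Nat.factorization_le_iff_dvd hn0 he0]
        intro q
        by_cases hqp : q.Prime
        · by_cases hqn : q ∣ n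
          · have hqe : q ∣ e := h' q hqp hqn
            have := hc q hqp hqe
            exact (Nat.Prime.pow_dvd_iff_le_factorization hqp he0).mp this
          · simp [Nat.factorization_eq_zero_of_not_dvd hqn]
        · simp [Nat.factorization_eq_zero_of_not_prime _ hqp]
      exact hene (Nat.dvd_antisymm hen hne)
    obtain ⟨q, hq, hqn, hqe⟩ := hq
    have hp : e.minFac.Prime := Nat.minFac_prime he1
    have hpe : e.minFac ∣ e := Nat.minFac_dvd e
    have hpn : e.minFac ∣ n := hpe.trans hen
    have hne : e.minFac ≠ q := by rintro rfl; exact hqe hpe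
    refine ⟨e.minFac, e.minFac * q, hp.one_lt,
      (Nat.Coprime.mul_dvd_of_dvd_of_dvd ?_ hpn hqn), Dvd.intro q rfl, hpe, ?_⟩
    · exact (Nat.coprime_primes hp hq).mpr hne
    · intro hd
      exact hqe ((dvd_mul_left q e.minFac).trans hd)

theorem stmt_9 {G : Type*} [Group G] [Finite G] (H₀ : Subgroup G)
    (h : {H : Subgroup G | ¬ IsIsolated H} = {H₀}) (a : G) (ha : a ∉ H₀)
    (hint : Subgroup.zpowers a ⊓ H₀ ≠ ⊥) :
    H₀ ≤ Subgroup.zpowers a ∧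
      Nat.card (Subgroup.zpowers a) = (Nat.card H₀) ^ 2 := by
  -- Step 1: zpowers a ⊓ H₀ is non-isolated, hence equals H₀
  have hK : Subgroup.zpowers a ⊓ H₀ = H₀ := by
    have hni : ¬ IsIsolated (Subgroup.zpowers a ⊓ H₀) := by
      intro hiso
      rcases hiso a with hmem | hbot
      · exact ha hmem.2
      · apply hint
        rw [← hbot]
        rw [inf_eq_right.mpr (inf_le_left : Subgroup.zpowers a ⊓ H₀ ≤ Subgroup.zpowers a)]
    have : Subgroup.zpowers a ⊓ H₀ ∈ ({H₀} : Set (Subgroup G)) := h ▸ hni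
    exact this
  have hle : H₀ ≤ Subgroup.zpowers a := hK ▸ inf_le_left
  refine ⟨hle, ?_⟩
  have hbotne : H₀ ≠ ⊥ := by rw [← hK]; exact hint
  have hcard : Nat.card (Subgroup.zpowers a) = orderOf a := Nat.card_zpowers a
  obtain ⟨n, hn⟩ : ∃ n, n = orderOf a := ⟨_, rfl⟩
  obtain ⟨d, hd⟩ : ∃ d, d = Nat.card H₀ := ⟨_, rfl⟩
  rw [hcard, ← hn, ← hd]
  have hn0 : n ≠ 0 := by rw [hn]; exact (orderOf_pos a).ne'
  have hdn : d ∣ n := by rw [hn, ← hcard, hd]; exact Subgroup.card_dvd_of_le hle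
  have hd1 : d ≠ 1 := by
    intro h1
    exact hbotne (Subgroup.card_eq_one.mp (hd.symm.trans h1))
  have hdn' : d ≠ n := by
    intro h1
    have : H₀ = Subgroup.zpowers a := by
      apply Subgroup.eq_of_le_of_card_ge hle
      rw [hcard, ← hn, ← h1, hd]
    exact ha (this ▸ Subgroup.mem_zpowers a)
  have hd0 : d ≠ 0 := by rintro rfl; exact hn0 (zero_dvd_iff.mp hdn)
  have he_dvd : n / d ∣ n := Nat.div_dvd_of_dvd hdn
  have he1 : n / d ≠ 1 := by
    intro h1
    apply hdn'
    have := Nat.div_mul_cancel hdn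
    rw [h1, one_mul] at this
    omega
  have hene : n / d ≠ n := by
    intro h1
    apply hd1
    have h2 := Nat.div_mul_cancel hdn
    rw [h1] at h2
    have : n * 1 = n * d := by omega
    exact (Nat.eq_of_mul_eq_mul_left (by omega) this).symm
  obtain ⟨p, t, hp1, htn, hpt, hpe, hte⟩ := exists_pt n (n / d) hn0 he_dvd he1 hene
  have hni := core_nonisolated a n p t (n / d) hn.symm hn0 hp1 htn hpt hpe he_dvd hte
  rw [Nat.div_div_self hdn hn0] at hni
  have heq : Subgroup.zpowers (a ^ d) = H₀ := by
    have : Subgroup.zpowers (a ^ d) ∈ ({H₀} : Set (Subgroup G)) := h ▸ hni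
    exact this
  have hcard2 : Nat.card (Subgroup.zpowers (a ^ d)) = n / d := by
    rw [Nat.card_zpowers, orderOf_pow, ← hn, Nat.gcd_eq_right hdn]
  rw [heq, ← hd] at hcard2
  calc n = d * (n / d) := (Nat.mul_div_cancel' hdn).symm
    _ = d ^ 2 := by rw [← hcard2, sq]
end

section
/- Let G be a generalized quaternion 2-group Q_{2ⁿ} with n ≥ 3 (the group of order 2ⁿ with presentation ⟨a, b ∣ a^{2^{n-2}} = b², a^{2^{n-1}} = 1, b⁻¹ab = a⁻¹⟩). A subgroup H of G is isolated if and only if H is the trivial subgroup or H = G. -/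
/-- The generalized quaternion 2-group has a unique involution. -/
lemma invol_unique (k : ℕ) (g : QuaternionGroup (2 ^ k))
    (hg2 : g ^ 2 = 1) (hg1 : g ≠ 1) :
    g = QuaternionGroup.a ((2 ^ k : ℕ) : ZMod (2 * 2 ^ k)) := by
  have hN0 : ((2 ^ k : ℕ) : ZMod (2 * 2 ^ k)) ≠ 0 := by
    rw [Ne, ZMod.natCast_eq_zero_iff]
    intro h
    have h1 := Nat.le_of_dvd (by positivity) h
    have h2 : 0 < 2 ^ k := by positivity
    omega
  cases g with
  | a i =>
      have h2i : QuaternionGroup.a (i + i) = QuaternionGroup.a 0 := by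
        rw [← QuaternionGroup.a_mul_a, ← sq, hg2, QuaternionGroup.one_def]
      have hii : i + i = 0 := by injection h2i
      have hine : i ≠ 0 := by
        intro h; apply hg1; rw [h, ← QuaternionGroup.one_def]
      have hval : 2 * 2 ^ k ∣ i.val + i.val := by
        have : ((i.val + i.val : ℕ) : ZMod (2 * 2 ^ k)) = 0 := by
          push_cast
          rw [ZMod.natCast_zmod_val, hii]
        rwa [ZMod.natCast_eq_zero_iff] at this
      have hlt : i.val < 2 * 2 ^ k := i.val_lt
      have hvne : i.val ≠ 0 := by
        intro h
        apply hine
        rw [← ZMod.natCast_zmod_val i, h, Nat.cast_zero]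
      obtain ⟨q, hq⟩ := hval
      have hq2 : q < 2 := by
        by_contra hge
        push_neg at hge
        have h2 : 2 * 2 ^ k * 2 ≤ 2 * 2 ^ k * q := Nat.mul_le_mul_left _ hge
        rw [← hq] at h2
        omega
      interval_cases q
      · omega
      · have : i.val = 2 ^ k := by omega
        rw [← ZMod.natCast_zmod_val i, this]
  | xa i =>
      exfalso
      rw [QuaternionGroup.xa_sq, QuaternionGroup.one_def] at hg2
      exact hN0 (by injection hg2)

/-- The central involution lies in every nontrivial cyclic subgroup. -/
lemma central_invol_mem (k : ℕ) (x : QuaternionGroup (2 ^ k))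
    (hx : x ≠ 1) :
    (QuaternionGroup.a ((2 ^ k : ℕ) : ZMod (2 * 2 ^ k))) ∈ Subgroup.zpowers x := by
  haveI : NeZero (2 ^ k) := ⟨pow_ne_zero _ two_ne_zero⟩
  have hcard : Fintype.card (QuaternionGroup (2 ^ k)) = 2 ^ (k + 2) := by
    rw [QuaternionGroup.card]; ring
  have hdvd : orderOf x ∣ 2 ^ (k + 2) := hcard ▸ orderOf_dvd_card
  obtain ⟨m, hm, hord⟩ := (Nat.dvd_prime_pow Nat.prime_two).mp hdvd
  have hm1 : 1 ≤ m := by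
    rcases Nat.eq_zero_or_pos m with rfl | h
    · simp only [pow_zero] at hord
      exact absurd (orderOf_eq_one_iff.mp hord) hx
    · exact h
  have hy2 : (x ^ 2 ^ (m - 1)) ^ 2 = 1 := by
    rw [← pow_mul, ← pow_succ]
    have hms : m - 1 + 1 = m := by omega
    rw [hms, ← hord, pow_orderOf_eq_one]
  have hy1 : x ^ 2 ^ (m - 1) ≠ 1 := by
    intro h
    have hd : orderOf x ∣ 2 ^ (m - 1) := orderOf_dvd_of_pow_eq_one h
    rw [hord] at hd
    have hle := Nat.le_of_dvd (by positivity) hd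
    exact absurd hle (not_le.mpr (Nat.pow_lt_pow_right (by norm_num) (by omega)))
  have hyeq := invol_unique k _ hy2 hy1
  rw [← hyeq]
  exact Subgroup.pow_mem _ (Subgroup.mem_zpowers x) _

theorem stmt_12 (n : ℕ) (hn : 3 ≤ n)
    (H : Subgroup (QuaternionGroup (2 ^ (n - 2)))) :
    IsIsolated H ↔ H = ⊥ ∨ H = ⊤ := by
  constructor
  · intro hiso
    by_cases hbot : H = ⊥
    · exact Or.inl hbot
    right
    obtain ⟨⟨h, hhH⟩, hh1⟩ := Subgroup.ne_bot_iff_exists_ne_one.mp hbot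
    have hh1' : h ≠ 1 := by simpa [Subtype.ext_iff] using hh1
    have hzH : (QuaternionGroup.a ((2 ^ (n - 2) : ℕ) : ZMod (2 * 2 ^ (n - 2)))) ∈ H := by
      obtain ⟨j, hj⟩ := central_invol_mem (n - 2) h hh1'
      rw [← hj]
      exact Subgroup.zpow_mem H hhH j
    have hz1 : (QuaternionGroup.a ((2 ^ (n - 2) : ℕ) : ZMod (2 * 2 ^ (n - 2)))) ≠ 1 := by
      rw [QuaternionGroup.one_def]
      intro h'
      have h0 : ((2 ^ (n - 2) : ℕ) : ZMod (2 * 2 ^ (n - 2))) = 0 := by injection h'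
      rw [ZMod.natCast_eq_zero_iff] at h0
      have h1 := Nat.le_of_dvd (by positivity) h0
      have h2 : 0 < 2 ^ (n - 2) := by positivity
      omega
    rw [Subgroup.eq_top_iff']
    intro x
    rcases hiso x with hx | hx
    · exact hx
    · by_cases hx1 : x = 1
      · rw [hx1]; exact Subgroup.one_mem H
      exfalso
      have hzmem : (QuaternionGroup.a ((2 ^ (n - 2) : ℕ) : ZMod (2 * 2 ^ (n - 2)))) ∈
          Subgroup.zpowers x ⊓ H := ⟨central_invol_mem (n - 2) x hx1, hzH⟩
      rw [hx] at hzmem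
      exact hz1 (Subgroup.mem_bot.mp hzmem)
  · rintro (rfl | rfl) x
    · right; simp
    · left; exact Subgroup.mem_top x
end

section
/- Let p be a prime and let G = Z_{p^{α₁}} × Z_{p^{α₂}} × ⋯ × Z_{p^{α_k}} be a finite abelian p-group with 2 ≤ α₁ ≤ α₂ ≤ ⋯ ≤ α_k. Then G has no proper nontrivial isolated subgroup, i.e., a subgroup H of G is isolated if and only if H is the trivial subgroup or H = G. -/
/-- An additive subgroup `H` of an additive group `G` is *isolated* if for every `x : G`,
either `x ∈ H` or `⟨x⟩ ⊓ H = ⊥`. -/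
def IsAddIsolated {G : Type*} [AddGroup G] (H : AddSubgroup G) : Prop :=
  ∀ x : G, x ∈ H ∨ AddSubgroup.zmultiples x ⊓ H = ⊥

lemma aux_nat (p m v : ℕ) (hp : p.Prime) (hm : 2 ≤ m) (h : p ^ m ∣ p * v) : p ∣ v := by
  obtain ⟨a, ha⟩ : ∃ a, m = a + 2 := ⟨m - 2, by omega⟩
  subst ha
  have h1 : p ^ (a + 1) * p ∣ v * p := by
    rw [mul_comm v]
    simpa [pow_succ] using h
  have h2 : p ^ (a + 1) ∣ v := (mul_dvd_mul_iff_right hp.pos.ne').mp h1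
  exact dvd_trans (dvd_pow_self p (Nat.succ_ne_zero a)) h2

lemma aux_pow_smul (p k : ℕ) (α : Fin k → ℕ) (y : ∀ i : Fin k, ZMod (p ^ α i)) :
    p ^ (∑ i, α i) • y = 0 := by
  funext i
  have h1 : (p ^ α i : ℕ) ∣ p ^ (∑ j, α j) :=
    pow_dvd_pow p (Finset.single_le_sum (fun j _ => Nat.zero_le _) (Finset.mem_univ i))
  have h2 : ((p ^ (∑ j, α j) : ℕ) : ZMod (p ^ α i)) = 0 :=
    (ZMod.natCast_eq_zero_iff _ _).mpr h1
  simp only [Pi.smul_apply, Pi.zero_apply, nsmul_eq_mul, h2, zero_mul]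

lemma aux_div_s13 (p k : ℕ) (hp : p.Prime) (α : Fin k → ℕ) (hα : ∀ i, 2 ≤ α i)
    (h : ∀ i : Fin k, ZMod (p ^ α i)) (hh : p • h = 0) :
    ∃ w, p • w = h := by
  have hp0 : p ≠ 0 := hp.pos.ne'
  refine ⟨fun i => (((h i).val / p : ℕ) : ZMod (p ^ α i)), funext fun i => ?_⟩
  have hne : NeZero (p ^ α i) := ⟨pow_ne_zero _ hp0⟩
  have hval : ((h i).val : ZMod (p ^ α i)) = h i := ZMod.natCast_rightInverse _
  have hh0 : (p : ZMod (p ^ α i)) * h i = 0 := by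
    have := congrFun hh i
    simpa [nsmul_eq_mul] using this
  have hdvd : p ^ α i ∣ p * (h i).val := by
    rw [← ZMod.natCast_eq_zero_iff]
    push_cast
    rw [hval]; exact hh0
  have hpdvd : p ∣ (h i).val := aux_nat p (α i) _ hp (hα i) hdvd
  simp only [Pi.smul_apply, nsmul_eq_mul]
  rw [show (p : ZMod (p ^ α i)) * ((((h i).val / p : ℕ)) : ZMod (p ^ α i))
      = ((p * ((h i).val / p) : ℕ) : ZMod (p ^ α i)) by push_cast; ring]
  rw [Nat.mul_div_cancel' hpdvd, hval]

lemma aux_min (p k : ℕ) (α : Fin k → ℕ) (H : AddSubgroup (∀ i : Fin k, ZMod (p ^ α i)))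
    (y : ∀ i : Fin k, ZMod (p ^ α i)) (hy : y ∉ H) :
    ∃ x, x ∉ H ∧ p • x ∈ H := by
  have hex : ∃ n, p ^ n • y ∈ H :=
    ⟨∑ i, α i, by rw [aux_pow_smul]; exact zero_mem H⟩
  classical
  set n := Nat.find hex with hn
  have hnpos : n ≠ 0 := by
    intro h0
    have := Nat.find_spec hex
    rw [← hn, h0] at this
    simp at this
    exact hy this
  have e : p * p ^ (n - 1) = p ^ n := by
    have h1 : n - 1 + 1 = n := by omega
    rw [mul_comm, ← pow_succ, h1]
  refine ⟨p ^ (n - 1) • y, Nat.find_min hex (by omega), ?_⟩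
  rw [smul_smul, e]
  exact Nat.find_spec hex

theorem stmt_13 (p k : ℕ) (hp : p.Prime) (α : Fin k → ℕ)
    (hα : ∀ i, 2 ≤ α i) (hmono : Monotone α)
    (H : AddSubgroup (∀ i : Fin k, ZMod (p ^ α i))) :
    IsAddIsolated H ↔ H = ⊥ ∨ H = ⊤ := by
  constructor
  · intro hiso
    by_contra hcon
    push_neg at hcon
    obtain ⟨hbot, htop⟩ := hcon
    obtain ⟨h₀, h₀H, h₀ne⟩ : ∃ g ∈ H, g ≠ 0 := by
      by_contra hc
      push_neg at hc
      exact hbot (le_antisymm (fun g hg => hc g hg) bot_le)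
    classical
    have hex : ∃ n, p ^ n • h₀ = 0 := ⟨∑ i, α i, aux_pow_smul p k α h₀⟩
    set n := Nat.find hex with hn
    have hnpos : n ≠ 0 := by
      intro h0
      have := Nat.find_spec hex
      rw [← hn, h0] at this
      simp at this
      exact h₀ne this
    set h : ∀ i : Fin k, ZMod (p ^ α i) := p ^ (n - 1) • h₀ with hdef
    have hH : h ∈ H := AddSubgroup.nsmul_mem H h₀H _
    have hne : h ≠ 0 := Nat.find_min hex (by omega)
    have hph : p • h = 0 := by
      have e : p * p ^ (n - 1) = p ^ n := by
        have h1 : n - 1 + 1 = n := by omega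
        rw [mul_comm, ← pow_succ, h1]
      rw [hdef, smul_smul, e]
      exact Nat.find_spec hex
    obtain ⟨w, hw⟩ := aux_div_s13 p k hp α hα h hph
    have hwH : w ∈ H := by
      rcases hiso w with hw' | hw'
      · exact hw'
      · exfalso
        have : h ∈ AddSubgroup.zmultiples w ⊓ H :=
          ⟨AddSubgroup.mem_zmultiples_iff.mpr ⟨(p : ℤ), by rw [natCast_zsmul, hw]⟩, hH⟩
        rw [hw'] at this
        exact hne this
    obtain ⟨y, hy⟩ : ∃ y, y ∉ H := by
      by_contra hc
      push_neg at hc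
      exact htop ((AddSubgroup.eq_top_iff' H).mpr hc)
    obtain ⟨x, hxH, hpx⟩ := aux_min p k α H y hy
    have hpx0 : p • x = 0 := by
      rcases hiso x with hx' | hx'
      · exact absurd hx' hxH
      · have : p • x ∈ AddSubgroup.zmultiples x ⊓ H :=
          ⟨AddSubgroup.mem_zmultiples_iff.mpr ⟨(p : ℤ), by rw [natCast_zsmul]⟩, hpx⟩
        rw [hx'] at this
        exact this
    have hxw : x + w ∉ H := fun hc => hxH (by simpa using AddSubgroup.sub_mem H hc hwH)
    rcases hiso (x + w) with hc | hc
    · exact hxw hc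
    · have : h ∈ AddSubgroup.zmultiples (x + w) ⊓ H := by
        refine ⟨AddSubgroup.mem_zmultiples_iff.mpr ⟨(p : ℤ), ?_⟩, hH⟩
        rw [natCast_zsmul, smul_add, hpx0, hw, zero_add]
      rw [hc] at this
      exact hne this
  · rintro (rfl | rfl)
    · intro x; right; exact inf_bot_eq _
    · intro x; left; trivial
end

section
/- Let G be a finite group in which every subgroup is isolated. Then every nontrivial element of G has prime order. -/
theorem stmt_17 {G : Type*} [Group G] [Finite G]
    (h : ∀ H : Subgroup G, IsIsolated H) (g : G) (hg : g ≠ 1) :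
    (orderOf g).Prime := by
  set n := orderOf g with hn
  have hnpos : 0 < n := orderOf_pos g
  have hn1 : n ≠ 1 := fun hone => hg (orderOf_eq_one_iff.mp hone)
  set p := n.minFac with hp
  have hpprime : p.Prime := Nat.minFac_prime hn1
  have hpdvd : p ∣ n := Nat.minFac_dvd n
  rcases h (Subgroup.zpowers (g ^ p)) g with hmem | hbot
  · exfalso
    have hle : Subgroup.zpowers g ≤ Subgroup.zpowers (g ^ p) :=
      Subgroup.zpowers_le.mpr hmem
    have hcard : orderOf g ≤ orderOf (g ^ p) := by
      rw [← Nat.card_zpowers, ← Nat.card_zpowers]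
      exact Subgroup.card_le_of_le hle
    have hord : orderOf (g ^ p) = n / p := by
      rw [orderOf_pow_of_dvd (Nat.Prime.ne_zero hpprime) hpdvd]
    have hlt : n / p < n := Nat.div_lt_self hnpos hpprime.one_lt
    omega
  · have hg1 : g ^ p ∈ Subgroup.zpowers g ⊓ Subgroup.zpowers (g ^ p) :=
      ⟨Subgroup.npow_mem_zpowers g p, Subgroup.mem_zpowers _⟩
    rw [hbot] at hg1
    have : g ^ p = 1 := Subgroup.mem_bot.mp hg1
    have hdvd : n ∣ p := orderOf_dvd_of_pow_eq_one this
    have := (Nat.Prime.eq_one_or_self_of_dvd hpprime n hdvd).resolve_left hn1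
    rw [this]
    exact hpprime
end
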